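/- arXiv:1507.05530 — 14 statements merged into one kernel-verified Lean document; each statement's English description precedes it below -/
import Mathlib

section
/- Let x : [0,∞) → (ℝ^d)^n be a differentiable function satisfying x'(t) = f(x(t)) for all t ≥ 0, and define m_2(y) = ∑_{i=1}^n w_i |y_i|² for y ∈ (ℝ^d)^n. Then t ↦ m_2(x(t)) is nonincreasing on [0,∞): for all 0 ≤ s ≤ t, m_2(x(t)) ≤ m_2(x(s)). -/
open Finset RealInnerProductSpace

/-- Swapping indices in an off-diagonal double sum. -/
lemma sum_offdiag_comm {n : ℕ} (F : Fin n → Fin n → ℝ) :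
    ∑ i, ∑ j ∈ Finset.univ.filter (fun j => j ≠ i), F i j
      = ∑ i, ∑ j ∈ Finset.univ.filter (fun j => j ≠ i), F j i := by
  simp only [Finset.sum_filter]
  rw [Finset.sum_comm]
  refine Finset.sum_congr rfl fun i _ => Finset.sum_congr rfl fun j _ => ?_
  by_cases h : i ≠ j
  · rw [if_pos h, if_pos h.symm]
  · push_neg at h; subst h; simp

/-- Along any global solution of the opinion dynamics, the weighted second
moment `m₂(x(t)) = ∑ i, w i * ‖x i (t)‖²` is nonincreasing in time. -/
theorem second_moment_nonincreasing {n d : ℕ}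
    (w : Fin n → ℝ) (hw : ∀ i, 0 < w i)
    (ξ : Fin n → Fin n → ℝ → ℝ)
    (hξnn : ∀ i j r, 0 ≤ r → 0 ≤ ξ i j r)
    (hξsym : ∀ i j, i ≠ j → ξ i j = ξ j i)
    (f : (Fin n → EuclideanSpace ℝ (Fin d)) → (Fin n → EuclideanSpace ℝ (Fin d)))
    (hf : ∀ y i, f y i = ∑ j ∈ Finset.univ.filter (fun j => j ≠ i),
        ξ i j (‖y j - y i‖) • (w j • (y j - y i)))
    (x : ℝ → Fin n → EuclideanSpace ℝ (Fin d))
    (hx : ∀ t, 0 ≤ t → HasDerivAt x (f (x t)) t) :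
    ∀ s t, 0 ≤ s → s ≤ t → (∑ i, w i * ‖x t i‖ ^ 2) ≤ ∑ i, w i * ‖x s i‖ ^ 2 := by
  intro s t hs hst
  set g : ℝ → ℝ := fun u => ∑ i, w i * ‖x u i‖ ^ 2 with hgdef
  set D : ℝ → ℝ := fun u =>
    ∑ i, w i * (⟪x u i, f (x u) i⟫ + ⟪f (x u) i, x u i⟫) with hDdef
  have hderiv : ∀ u, 0 ≤ u → HasDerivAt g (D u) u := by
    intro u hu
    have hxi : ∀ i, HasDerivAt (fun v => x v i) (f (x u) i) u := fun i =>
      (ContinuousLinearMap.proj i : (Fin n → EuclideanSpace ℝ (Fin d)) →L[ℝ] EuclideanSpace ℝ (Fin d)).hasFDerivAt.comp_hasDerivAt u (hx u hu)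
    have hinner : HasDerivAt (fun v => ∑ i, w i * ⟪x v i, x v i⟫) (D u) u := by
      apply HasDerivAt.fun_sum
      intro i _
      exact ((hxi i).inner ℝ (hxi i)).const_mul (w i)
    have hgeq : g = fun v => ∑ i, w i * ⟪x v i, x v i⟫ := by
      funext v
      exact Finset.sum_congr rfl fun i _ => by rw [real_inner_self_eq_norm_sq]
    rw [hgeq]
    exact hinner
  have hDnonpos : ∀ u, 0 ≤ u → D u ≤ 0 := by
    intro u hu
    set y := x u with hy
    set c : Fin n → Fin n → ℝ := fun i j => 2 * w i * w j * ξ i j ‖y j - y i‖ with hc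
    have hterm : ∀ i, w i * (⟪y i, f y i⟫ + ⟪f y i, y i⟫)
        = ∑ j ∈ Finset.univ.filter (fun j => j ≠ i), c i j * ⟪y i, y j - y i⟫ := by
      intro i
      rw [real_inner_comm (y i) (f y i), ← two_mul, hf, inner_sum]
      simp only [real_inner_smul_right]
      rw [Finset.mul_sum, Finset.mul_sum]
      exact Finset.sum_congr rfl fun j _ => by simp only [hc]; ring
    have hD : D u = ∑ i, ∑ j ∈ Finset.univ.filter (fun j => j ≠ i),
        c i j * ⟪y i, y j - y i⟫ := by
      simp only [hDdef, ← hy]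
      exact Finset.sum_congr rfl fun i _ => hterm i
    set T := ∑ i, ∑ j ∈ Finset.univ.filter (fun j => j ≠ i),
        c i j * ⟪y i, y j - y i⟫ with hT
    have hswap : T = ∑ i, ∑ j ∈ Finset.univ.filter (fun j => j ≠ i),
        c j i * ⟪y j, y i - y j⟫ :=
      sum_offdiag_comm (fun i j => c i j * ⟪y i, y j - y i⟫)
    have h2T : T + T ≤ 0 := by
      nth_rewrite 2 [hswap]
      rw [hT, ← Finset.sum_add_distrib]
      apply Finset.sum_nonpos
      intro i _
      rw [← Finset.sum_add_distrib]
      apply Finset.sum_nonpos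
      intro j hj
      have hji : j ≠ i := by simpa using hj
      have hcsym : c j i = c i j := by
        simp only [hc]
        rw [hξsym j i hji, norm_sub_rev]
        ring
      have hinn : ⟪y i, y j - y i⟫ + ⟪y j, y i - y j⟫ = -‖y j - y i‖ ^ 2 := by
        rw [← real_inner_self_eq_norm_sq]
        simp only [inner_sub_left, inner_sub_right, real_inner_comm (y j) (y i)]
        ring
      rw [hcsym, ← mul_add, hinn]
      have hcnn : 0 ≤ c i j := by
        have := hξnn i j ‖y j - y i‖ (norm_nonneg _)
        have := (hw i).le
        have := (hw j).le
        positivity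
      nlinarith [sq_nonneg ‖y j - y i‖]
    rw [hD]
    linarith
  have hcont : ContinuousOn g (Set.Ici (0 : ℝ)) := fun u hu =>
    (hderiv u hu).continuousAt.continuousWithinAt
  have hanti : AntitoneOn g (Set.Ici (0 : ℝ)) := by
    apply antitoneOn_of_deriv_nonpos (convex_Ici 0) hcont
    · intro u hu
      rw [interior_Ici] at hu
      exact (hderiv u hu.le).differentiableAt.differentiableWithinAt
    · intro u hu
      rw [interior_Ici] at hu
      rw [(hderiv u hu.le).deriv]
      exact hDnonpos u hu.le
  exact hanti hs (le_trans hs hst) hst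
end

section
/- Every global solution of the opinion dynamics stays in a compact set forward in time: if x : [0,∞) → (ℝ^d)^n is differentiable with x'(t) = f(x(t)) for all t ≥ 0, then there exists a compact set K ⊂ (ℝ^d)^n such that x(t) ∈ K for all t ≥ 0; in particular ∑_{i=1}^n w_i |x_i(t)|² ≤ ∑_{i=1}^n w_i |x_i(0)|² for all t ≥ 0. -/
open Finset

lemma opinion_key_ineq {n : ℕ} {E : Type*} [NormedAddCommGroup E] [InnerProductSpace ℝ E]
    (c : Fin n → Fin n → ℝ) (hsym : ∀ i j, i ≠ j → c i j = c j i)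
    (hnn : ∀ i j, 0 ≤ c i j) (y : Fin n → E) :
    ∑ i, ∑ j ∈ Finset.univ.filter (fun j => j ≠ i),
      c i j * (inner ℝ (y j - y i) (y i) : ℝ) ≤ 0 := by
  set g : Fin n → Fin n → ℝ :=
    fun i j => if j ≠ i then c i j * (inner ℝ (y j - y i) (y i) : ℝ) else 0 with hg
  have hL : ∑ i, ∑ j ∈ Finset.univ.filter (fun j => j ≠ i),
      c i j * (inner ℝ (y j - y i) (y i) : ℝ) = ∑ i, ∑ j, g i j := by
    refine Finset.sum_congr rfl fun i _ => ?_
    rw [Finset.sum_filter]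
  rw [hL]
  have hterm : ∀ i j, g i j + g j i ≤ 0 := by
    intro i j
    by_cases h : j = i
    · subst h; simp [hg]
    · have h' : i ≠ j := fun e => h e.symm
      have hcs : c j i = c i j := (hsym i j h').symm
      simp only [hg, if_pos h, if_pos h']
      have e1 : (inner ℝ (y j - y i) (y i) : ℝ) + (inner ℝ (y i - y j) (y j) : ℝ)
          = -‖y j - y i‖ ^ 2 := by
        have h1 : (inner ℝ (y i - y j) (y j) : ℝ) = -(inner ℝ (y j - y i) (y j) : ℝ) := by
          rw [show y i - y j = -(y j - y i) from by abel, inner_neg_left]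
        rw [h1, ← sub_eq_add_neg, ← inner_sub_right,
          show y i - y j = -(y j - y i) from by abel, inner_neg_right,
          real_inner_self_eq_norm_sq]
      rw [hcs]
      have e2 : c i j * (inner ℝ (y j - y i) (y i) : ℝ) + c i j * (inner ℝ (y i - y j) (y j) : ℝ)
          = c i j * (-‖y j - y i‖ ^ 2) := by rw [← mul_add, e1]
      rw [e2]
      have := hnn i j
      nlinarith [sq_nonneg ‖y j - y i‖]
  have h2 : (2:ℝ) * ∑ i, ∑ j, (g i j) = ∑ i, ∑ j, (g i j + g j i) := by
    simp only [Finset.sum_add_distrib]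
    rw [Finset.sum_comm (f := fun i j => g j i)]
    ring
  have hsum : ∑ i, ∑ j, (g i j + g j i) ≤ 0 :=
    Finset.sum_nonpos fun i _ => Finset.sum_nonpos fun j _ => hterm i j
  linarith [h2 ▸ hsum]

/-- Every global solution of the opinion dynamics stays in a compact set
forward in time; in particular the weighted second moment never exceeds its initial value. -/
theorem trajectory_stays_in_compact {n d : ℕ}
    (w : Fin n → ℝ) (hw : ∀ i, 0 < w i)
    (ξ : Fin n → Fin n → ℝ → ℝ)
    (hξnn : ∀ i j r, 0 ≤ r → 0 ≤ ξ i j r)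
    (hξsym : ∀ i j, i ≠ j → ξ i j = ξ j i)
    (f : (Fin n → EuclideanSpace ℝ (Fin d)) → (Fin n → EuclideanSpace ℝ (Fin d)))
    (hf : ∀ y i, f y i = ∑ j ∈ Finset.univ.filter (fun j => j ≠ i),
        ξ i j (‖y j - y i‖) • (w j • (y j - y i)))
    (x : ℝ → Fin n → EuclideanSpace ℝ (Fin d))
    (hx : ∀ t, 0 ≤ t → HasDerivAt x (f (x t)) t) :
    (∃ K : Set (Fin n → EuclideanSpace ℝ (Fin d)), IsCompact K ∧ ∀ t, 0 ≤ t → x t ∈ K)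
      ∧ ∀ t, 0 ≤ t → (∑ i, w i * ‖x t i‖ ^ 2) ≤ ∑ i, w i * ‖x 0 i‖ ^ 2 := by
  classical
  set V : ℝ → ℝ := fun t => ∑ i, w i * ‖x t i‖ ^ 2 with hVdef
  -- derivative of V
  have hVderiv : ∀ t, 0 ≤ t →
      HasDerivAt V (∑ i, w i * (2 * (inner ℝ (f (x t) i) (x t i) : ℝ))) t := by
    intro t ht
    have hcomp : ∀ i, HasDerivAt (fun s => x s i) (f (x t) i) t :=
      fun i => hasDerivAt_pi.mp (hx t ht) i
    have hsq : ∀ i, HasDerivAt (fun s => ‖x s i‖ ^ 2)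
        (2 * (inner ℝ (f (x t) i) (x t i) : ℝ)) t := by
      intro i
      have h := (hcomp i).inner ℝ (hcomp i)
      have e : (inner ℝ (x t i) (f (x t) i) : ℝ) + (inner ℝ (f (x t) i) (x t i) : ℝ)
          = 2 * (inner ℝ (f (x t) i) (x t i) : ℝ) := by
        rw [real_inner_comm (x t i)]; ring
      rw [e] at h
      simpa only [real_inner_self_eq_norm_sq] using h
    exact HasDerivAt.fun_sum fun i _ => (hsq i).const_mul (w i)
  -- the derivative is nonpositive
  have hderiv_nonpos : ∀ t, 0 ≤ t →
      (∑ i, w i * (2 * (inner ℝ (f (x t) i) (x t i) : ℝ))) ≤ 0 := by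
    intro t ht
    set y := x t with hy
    set c : Fin n → Fin n → ℝ := fun i j => w i * w j * ξ i j ‖y j - y i‖ with hc
    have hfi : ∀ i, (inner ℝ (f y i) (y i) : ℝ)
        = ∑ j ∈ Finset.univ.filter (fun j => j ≠ i),
            ξ i j ‖y j - y i‖ * w j * (inner ℝ (y j - y i) (y i) : ℝ) := by
      intro i
      rw [hf, sum_inner]
      refine Finset.sum_congr rfl fun j _ => ?_
      rw [real_inner_smul_left, real_inner_smul_left]; ring
    have hre : ∑ i, w i * (2 * (inner ℝ (f y i) (y i) : ℝ))
        = 2 * ∑ i, ∑ j ∈ Finset.univ.filter (fun j => j ≠ i),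
            c i j * (inner ℝ (y j - y i) (y i) : ℝ) := by
      simp only [Finset.mul_sum]
      refine Finset.sum_congr rfl fun i _ => ?_
      rw [hfi i]
      simp only [Finset.mul_sum]
      refine Finset.sum_congr rfl fun j _ => ?_
      simp only [hc]; ring
    rw [hre]
    have hsym : ∀ i j, i ≠ j → c i j = c j i := by
      intro i j hij
      simp only [hc]
      rw [hξsym i j hij, norm_sub_rev (y j) (y i)]; ring
    have hnn : ∀ i j, 0 ≤ c i j := fun i j =>
      mul_nonneg (mul_nonneg (hw i).le (hw j).le) (hξnn i j _ (norm_nonneg _))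
    have := opinion_key_ineq c hsym hnn y
    linarith
  -- V is nonincreasing on [0, ∞)
  have hmono : ∀ t, 0 ≤ t → V t ≤ V 0 := by
    have hcont : ContinuousOn V (Set.Ici 0) := fun t ht =>
      ((hVderiv t ht).continuousAt).continuousWithinAt
    have hdiff : DifferentiableOn ℝ V (interior (Set.Ici (0:ℝ))) := by
      rw [interior_Ici]
      exact fun t ht => ((hVderiv t (le_of_lt ht)).differentiableAt).differentiableWithinAt
    have hd0 : ∀ t ∈ interior (Set.Ici (0:ℝ)), deriv V t ≤ 0 := by
      rw [interior_Ici]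
      intro t ht
      rw [(hVderiv t ht.le).deriv]
      exact hderiv_nonpos t ht.le
    have hA := antitoneOn_of_deriv_nonpos (convex_Ici 0) hcont hdiff hd0
    exact fun t ht => hA Set.self_mem_Ici ht ht
  refine ⟨?_, hmono⟩
  -- compact set
  have hV0 : 0 ≤ V 0 :=
    Finset.sum_nonneg fun i _ => mul_nonneg (hw i).le (sq_nonneg _)
  set B : ℝ := ∑ j, V 0 / w j with hB
  have hBnn : 0 ≤ B := Finset.sum_nonneg fun j _ => div_nonneg hV0 (hw j).le
  refine ⟨Metric.closedBall 0 (Real.sqrt B), isCompact_closedBall _ _, fun t ht => ?_⟩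
  rw [Metric.mem_closedBall, dist_zero_right]
  rw [pi_norm_le_iff_of_nonneg (Real.sqrt_nonneg _)]
  intro i
  have h1 : w i * ‖x t i‖ ^ 2 ≤ V t :=
    Finset.single_le_sum (f := fun j => w j * ‖x t j‖ ^ 2)
      (fun j _ => mul_nonneg (hw j).le (sq_nonneg _)) (Finset.mem_univ i)
  have h2 : ‖x t i‖ ^ 2 ≤ V 0 / w i := by
    rw [le_div_iff₀ (hw i)]
    calc ‖x t i‖ ^ 2 * w i = w i * ‖x t i‖ ^ 2 := by ring
      _ ≤ V t := h1
      _ ≤ V 0 := hmono t ht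
  have h3 : V 0 / w i ≤ B :=
    Finset.single_le_sum (f := fun j => V 0 / w j)
      (fun j _ => div_nonneg hV0 (hw j).le) (Finset.mem_univ i)
  have h4 : ‖x t i‖ ^ 2 ≤ B := h2.trans h3
  exact (Real.le_sqrt (norm_nonneg _) hBnn).mpr h4
end

section
/- Assume that for all i ≠ j there exists q_ij = q_ji > 0 such that ξ_ij(r) = 0 if and only if r = 0 or r ≥ q_ij. Then for x ∈ (ℝ^d)^n, one has f(x) = 0 if and only if x belongs to the set F̄ = { y ∈ (ℝ^d)^n : for all i ≠ j, y_i = y_j or |y_i − y_j| ≥ q_ij }. -/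
open scoped RealInnerProductSpace

/-- If `ξᵢⱼ(r) = 0 ↔ r = 0 ∨ r ≥ qᵢⱼ` (for `i ≠ j`, `r ≥ 0`), then
`f(x) = 0` iff `x` belongs to the set `F̄` of configurations in which every pair of distinct
agents either share an opinion or are at distance at least `qᵢⱼ`. -/
theorem vector_field_zero_iff_mem_Fbar {n d : ℕ}
    (w : Fin n → ℝ) (hw : ∀ i, 0 < w i)
    (ξ : Fin n → Fin n → ℝ → ℝ)
    (hξnn : ∀ i j r, 0 ≤ r → 0 ≤ ξ i j r)
    (hξsym : ∀ i j, i ≠ j → ξ i j = ξ j i)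
    (q : Fin n → Fin n → ℝ)
    (hqsym : ∀ i j, i ≠ j → q i j = q j i)
    (hqpos : ∀ i j, i ≠ j → 0 < q i j)
    (hξzero : ∀ i j, i ≠ j → ∀ r, 0 ≤ r → (ξ i j r = 0 ↔ r = 0 ∨ q i j ≤ r))
    (f : (Fin n → EuclideanSpace ℝ (Fin d)) → (Fin n → EuclideanSpace ℝ (Fin d)))
    (hf : ∀ y i, f y i = ∑ j ∈ Finset.univ.filter (fun j => j ≠ i),
        ξ i j (‖y j - y i‖) • (w j • (y j - y i)))
    (x : Fin n → EuclideanSpace ℝ (Fin d)) :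
    f x = 0 ↔ ∀ i j, i ≠ j → x i = x j ∨ q i j ≤ ‖x i - x j‖ := by
  constructor
  · intro hfx
    -- symmetric nonnegative coefficients
    set g : Fin n → Fin n → ℝ := fun i j => ξ i j (‖x j - x i‖) * (w i * w j) with hg
    have hg_nonneg : ∀ i j, 0 ≤ g i j := fun i j =>
      mul_nonneg (hξnn i j _ (norm_nonneg _)) (le_of_lt (mul_pos (hw i) (hw j)))
    have hg_symm : ∀ i j, i ≠ j → g i j = g j i := by
      intro i j hij
      simp only [hg]
      rw [hξsym i j hij, norm_sub_rev]
      ring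
    -- the "inner" functional F
    set F : Fin n → Fin n → ℝ := fun i j => g i j * ⟪x i, x j - x i⟫ with hF
    -- each row sum of F vanishes since f x = 0
    have hrow : ∀ i, ∑ j ∈ Finset.univ.filter (fun j => j ≠ i), F i j = 0 := by
      intro i
      have h0 : f x i = 0 := congrFun hfx i
      have : ∑ j ∈ Finset.univ.filter (fun j => j ≠ i), F i j
          = w i * ⟪x i, f x i⟫ := by
        rw [hf x i, inner_sum, Finset.mul_sum]
        refine Finset.sum_congr rfl fun j hj => ?_
        rw [real_inner_smul_right, real_inner_smul_right]
        simp only [hF, hg]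
        ring
      rw [this, h0, inner_zero_right, mul_zero]
    have hT : ∑ i, ∑ j ∈ Finset.univ.filter (fun j => j ≠ i), F i j = 0 :=
      Finset.sum_eq_zero fun i _ => hrow i
    -- swapping lemma
    have swap : ∀ (G : Fin n → Fin n → ℝ),
        (∑ i, ∑ j ∈ Finset.univ.filter (fun j => j ≠ i), G i j)
        = ∑ i, ∑ j ∈ Finset.univ.filter (fun j => j ≠ i), G j i := by
      intro G
      simp only [Finset.sum_filter]
      rw [Finset.sum_comm]
      refine Finset.sum_congr rfl fun i _ => Finset.sum_congr rfl fun j _ => ?_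
      by_cases h : i = j
      · simp [h]
      · simp [h, Ne.symm h]
    have hT' : ∑ i, ∑ j ∈ Finset.univ.filter (fun j => j ≠ i), F j i = 0 := by
      rw [← swap F]; exact hT
    -- inner product identity
    have hinner : ∀ u v : EuclideanSpace ℝ (Fin d),
        ⟪u, v - u⟫ + ⟪v, u - v⟫ = -‖v - u‖ ^ 2 := by
      intro u v
      rw [inner_sub_right, inner_sub_right, norm_sub_sq_real,
        real_inner_self_eq_norm_sq, real_inner_self_eq_norm_sq, real_inner_comm v u]
      ring
    -- the nonnegative double sum vanishes
    have hsum : ∑ i, ∑ j ∈ Finset.univ.filter (fun j => j ≠ i),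
        g i j * ‖x j - x i‖ ^ 2 = 0 := by
      have : ∑ i, ∑ j ∈ Finset.univ.filter (fun j => j ≠ i), g i j * ‖x j - x i‖ ^ 2
          = -((∑ i, ∑ j ∈ Finset.univ.filter (fun j => j ≠ i), F i j)
            + (∑ i, ∑ j ∈ Finset.univ.filter (fun j => j ≠ i), F j i)) := by
        rw [← Finset.sum_add_distrib, ← Finset.sum_neg_distrib]
        refine Finset.sum_congr rfl fun i _ => ?_
        rw [← Finset.sum_add_distrib, ← Finset.sum_neg_distrib]
        refine Finset.sum_congr rfl fun j hj => ?_
        have hji : j ≠ i := (Finset.mem_filter.mp hj).2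
        simp only [hF]
        rw [hg_symm j i hji]
        have h2 := hinner (x i) (x j)
        linear_combination g i j * h2
      rw [this, hT, hT']
      ring
    -- each term is zero
    have hterm : ∀ i j, j ≠ i → g i j * ‖x j - x i‖ ^ 2 = 0 := by
      intro i j hji
      have houter : ∀ i ∈ Finset.univ, 0 ≤ ∑ j ∈ Finset.univ.filter (fun j => j ≠ i),
          g i j * ‖x j - x i‖ ^ 2 := fun i _ =>
        Finset.sum_nonneg fun j _ => mul_nonneg (hg_nonneg i j) (sq_nonneg _)
      have h1 : ∑ j ∈ Finset.univ.filter (fun j => j ≠ i),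
          g i j * ‖x j - x i‖ ^ 2 = 0 :=
        (Finset.sum_eq_zero_iff_of_nonneg houter).mp hsum i (Finset.mem_univ i)
      have h2 := (Finset.sum_eq_zero_iff_of_nonneg
        (fun j _ => mul_nonneg (hg_nonneg i j) (sq_nonneg _))).mp h1
      exact h2 j (Finset.mem_filter.mpr ⟨Finset.mem_univ j, hji⟩)
    -- conclude
    intro i j hij
    have h := hterm i j (Ne.symm hij)
    rcases mul_eq_zero.mp h with h1 | h2
    · -- g i j = 0, so ξ i j ‖x j - x i‖ = 0
      have hwij : w i * w j ≠ 0 := ne_of_gt (mul_pos (hw i) (hw j))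
      have hξ0 : ξ i j (‖x j - x i‖) = 0 := by
        rcases mul_eq_zero.mp h1 with h | h
        · exact h
        · exact absurd h hwij
      rcases (hξzero i j hij _ (norm_nonneg _)).mp hξ0 with h | h
      · left; rw [← sub_eq_zero]
        rw [← norm_eq_zero, norm_sub_rev]; exact h
      · right; rw [norm_sub_rev]; exact h
    · left
      have : ‖x j - x i‖ = 0 := by
        have := sq_eq_zero_iff.mp h2; exact this
      rw [← sub_eq_zero, ← norm_eq_zero, norm_sub_rev]; exact this
  · intro hFbar
    funext i
    rw [hf x i]
    refine Finset.sum_eq_zero fun j hj => ?_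
    have hji : j ≠ i := (Finset.mem_filter.mp hj).2
    rcases hFbar j i hji with h | h
    · rw [sub_eq_zero.mpr h, smul_zero, smul_zero]
    · have hq : q i j ≤ ‖x j - x i‖ := by
        rw [hqsym i j (Ne.symm hji)]; exact h
      rw [(hξzero i j (Ne.symm hji) _ (norm_nonneg _)).mpr (Or.inr hq), zero_smul]
end

section
/- Assume that for all i ≠ j there exists q_ij = q_ji > 0 such that ξ_ij(r) = 0 if and only if r = 0 or r ≥ q_ij. If x ∈ (ℝ^d)^n is such that there exist indices i* ≠ j* with x_{i*} ≠ x_{j*} and |x_{i*} − x_{j*}| < q_{i*j*}, then ∑_{i=1}^n w_i ⟨x_i, f_i(x)⟩ < 0; in particular f(x) ≠ 0. -/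
open scoped RealInnerProductSpace

/-- If two distinct agents `i*` and `j*` have distinct opinions within
mutual interaction range (`|x_{i*} − x_{j*}| < q_{i*j*}`), then
`∑ i, w i ⟪x i, f i (x)⟫ < 0`; in particular `f(x) ≠ 0`. -/
theorem inner_sum_neg_of_interacting_pair {n d : ℕ}
    (w : Fin n → ℝ) (hw : ∀ i, 0 < w i)
    (ξ : Fin n → Fin n → ℝ → ℝ)
    (hξnn : ∀ i j r, 0 ≤ r → 0 ≤ ξ i j r)
    (hξsym : ∀ i j, i ≠ j → ξ i j = ξ j i)
    (q : Fin n → Fin n → ℝ)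
    (hqsym : ∀ i j, i ≠ j → q i j = q j i)
    (hqpos : ∀ i j, i ≠ j → 0 < q i j)
    (hξzero : ∀ i j, i ≠ j → ∀ r, 0 ≤ r → (ξ i j r = 0 ↔ r = 0 ∨ q i j ≤ r))
    (f : (Fin n → EuclideanSpace ℝ (Fin d)) → (Fin n → EuclideanSpace ℝ (Fin d)))
    (hf : ∀ y i, f y i = ∑ j ∈ Finset.univ.filter (fun j => j ≠ i),
        ξ i j (‖y j - y i‖) • (w j • (y j - y i)))
    (x : Fin n → EuclideanSpace ℝ (Fin d))
    (istar jstar : Fin n) (hne : istar ≠ jstar)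
    (hxne : x istar ≠ x jstar)
    (hclose : ‖x istar - x jstar‖ < q istar jstar) :
    (∑ i, w i * ⟪x i, f x i⟫) < 0 ∧ f x ≠ 0 := by
  classical
  set c : Fin n → Fin n → ℝ := fun i j => ξ i j ‖x j - x i‖ * (w i * w j) with hc
  have hcsym : ∀ i j, i ≠ j → c i j = c j i := by
    intro i j hij
    simp only [hc]
    rw [hξsym i j hij, norm_sub_rev, mul_comm (w i)]
  have hcnn : ∀ i j, 0 ≤ c i j := fun i j =>
    mul_nonneg (hξnn i j _ (norm_nonneg _)) (mul_nonneg (hw i).le (hw j).le)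
  have key : (∑ i, w i * ⟪x i, f x i⟫)
      = ∑ i, ∑ j ∈ Finset.univ.filter (fun j => j ≠ i), c i j * ⟪x i, x j - x i⟫ := by
    refine Finset.sum_congr rfl fun i _ => ?_
    rw [hf, inner_sum, Finset.mul_sum]
    refine Finset.sum_congr rfl fun j hj => ?_
    rw [real_inner_smul_right, real_inner_smul_right]
    simp only [hc]; ring
  set A := ∑ i, ∑ j ∈ Finset.univ.filter (fun j => j ≠ i), c i j * ⟪x i, x j - x i⟫ with hA
  have hswap : A = ∑ i, ∑ j ∈ Finset.univ.filter (fun j => j ≠ i),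
      c j i * ⟪x j, x i - x j⟫ := by
    rw [hA, Finset.sum_comm' (t' := Finset.univ)
      (s' := fun j => Finset.univ.filter (fun i => i ≠ j)) ?_]
    intro i j
    simp [ne_comm]
  have hinner : ∀ a b : EuclideanSpace ℝ (Fin d),
      ⟪a, b - a⟫ + ⟪b, a - b⟫ = -‖b - a‖ ^ 2 := by
    intro a b
    rw [inner_sub_right, inner_sub_right, norm_sub_sq_real,
      real_inner_self_eq_norm_sq, real_inner_self_eq_norm_sq, real_inner_comm b a]
    ring
  set T := ∑ i, ∑ j ∈ Finset.univ.filter (fun j => j ≠ i), c i j * ‖x j - x i‖ ^ 2 with hT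
  have h2 : 2 * A = -T := by
    have : A + A = -T := by
      nth_rewrite 2 [hswap]
      rw [hA, hT, ← Finset.sum_add_distrib, ← Finset.sum_neg_distrib]
      refine Finset.sum_congr rfl fun i _ => ?_
      rw [← Finset.sum_add_distrib, ← Finset.sum_neg_distrib]
      refine Finset.sum_congr rfl fun j hj => ?_
      have hji : j ≠ i := (Finset.mem_filter.mp hj).2
      rw [← hcsym i j (Ne.symm hji), ← mul_add, hinner]
      ring
    linarith
  have hTpos : 0 < T := by
    rw [hT]
    refine Finset.sum_pos' (fun i _ => Finset.sum_nonneg fun j _ =>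
      mul_nonneg (hcnn i j) (sq_nonneg _)) ⟨istar, Finset.mem_univ _, ?_⟩
    refine Finset.sum_pos' (fun j _ => mul_nonneg (hcnn istar j) (sq_nonneg _))
      ⟨jstar, Finset.mem_filter.mpr ⟨Finset.mem_univ _, Ne.symm hne⟩, ?_⟩
    have hd : x jstar - x istar ≠ 0 := sub_ne_zero_of_ne (Ne.symm hxne)
    have hr : 0 < ‖x jstar - x istar‖ := norm_pos_iff.mpr hd
    have hξpos : 0 < ξ istar jstar ‖x jstar - x istar‖ := by
      rcases lt_or_eq_of_le (hξnn istar jstar _ (norm_nonneg (x jstar - x istar))) with h | h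
      · exact h
      · exfalso
        rcases (hξzero istar jstar hne _ (norm_nonneg (x jstar - x istar))).mp h.symm with h0 | hq
        · exact hr.ne' h0
        · rw [norm_sub_rev] at hq; linarith
    exact mul_pos (mul_pos hξpos (mul_pos (hw istar) (hw jstar))) (pow_pos hr 2)
  have hAneg : A < 0 := by linarith
  have hsum : (∑ i, w i * ⟪x i, f x i⟫) < 0 := by rw [key]; exact hAneg
  refine ⟨hsum, fun h0 => ?_⟩
  have hz : (∑ i, w i * ⟪x i, f x i⟫) = 0 := by
    refine Finset.sum_eq_zero fun i _ => ?_
    have : f x i = 0 := congrFun h0 i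
    rw [this, inner_zero_right, mul_zero]
  linarith
end

section
/- Assume each ξ_ij is continuous and that for all i ≠ j there exists q_ij = q_ji > 0 with ξ_ij(r) = 0 if and only if r = 0 or r ≥ q_ij. Let x* ∈ (ℝ^d)^n satisfy: for all i ≠ j, either x*_i = x*_j or |x*_i − x*_j| > q_ij. Then x* is strongly Lyapunov stable: for every ε > 0 there exists δ > 0 such that every differentiable function x : [0,∞) → (ℝ^d)^n with x'(t) = f(x(t)) for all t ≥ 0 and |x(0) − x*| < δ satisfies |x(t) − x*| < ε for all t ≥ 0. -/
open Finset RealInnerProductSpace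

lemma osc_key_sum_nonpos {n d : ℕ}
    (w : Fin n → ℝ) (hw : ∀ i, 0 < w i)
    (ξ : Fin n → Fin n → ℝ → ℝ)
    (hξnn : ∀ i j r, 0 ≤ r → 0 ≤ ξ i j r)
    (hξsym : ∀ i j, i ≠ j → ξ i j = ξ j i)
    (q : Fin n → Fin n → ℝ)
    (hξzero : ∀ i j, i ≠ j → ∀ r, 0 ≤ r → (ξ i j r = 0 ↔ r = 0 ∨ q i j ≤ r))
    (xstar y : Fin n → EuclideanSpace ℝ (Fin d))
    (hy : ∀ i j, i ≠ j → xstar i ≠ xstar j → q i j ≤ ‖y j - y i‖) :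
    (∑ i, w i * ⟪y i - xstar i,
      ∑ j ∈ Finset.univ.filter (fun j => j ≠ i),
        ξ i j (‖y j - y i‖) • (w j • (y j - y i))⟫) ≤ 0 := by
  set T : Fin n → Fin n → ℝ := fun i j =>
    w i * (ξ i j (‖y j - y i‖) * (w j * ⟪y i - xstar i, y j - y i⟫)) with hT
  have hLHS : ∑ i, w i * ⟪y i - xstar i,
      ∑ j ∈ Finset.univ.filter (fun j => j ≠ i),
        ξ i j (‖y j - y i‖) • (w j • (y j - y i))⟫
      = ∑ i, ∑ j ∈ Finset.univ.filter (fun j => j ≠ i), T i j := by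
    refine Finset.sum_congr rfl fun i _ => ?_
    rw [inner_sum, Finset.mul_sum]
    refine Finset.sum_congr rfl fun j _ => ?_
    rw [real_inner_smul_right, real_inner_smul_right, hT]
  rw [hLHS]
  set S := ∑ i, ∑ j ∈ Finset.univ.filter (fun j => j ≠ i), T i j with hS
  have hswap : S = ∑ i, ∑ j ∈ Finset.univ.filter (fun j => j ≠ i), T j i := by
    rw [hS]
    exact Finset.sum_comm' (by intro a b; simp [ne_comm])
  have hpair : ∀ i j, j ≠ i → T i j + T j i ≤ 0 := by
    intro i j hji
    have hij : i ≠ j := hji.symm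
    have hnrev : ‖y i - y j‖ = ‖y j - y i‖ := norm_sub_rev _ _
    have hξs : ξ j i = ξ i j := (hξsym i j hij).symm
    have hcomb : T i j + T j i
        = w i * w j * ξ i j (‖y j - y i‖) *
          ⟪(y i - xstar i) - (y j - xstar j), y j - y i⟫ := by
      simp only [hT, hξs, hnrev]
      rw [show (y i - y j) = -(y j - y i) by abel, inner_neg_right]
      simp only [inner_sub_left]
      ring
    by_cases hx : xstar i = xstar j
    · have h2 : (y i - xstar i) - (y j - xstar j) = -(y j - y i) := by rw [hx]; abel
      rw [hcomb, h2, inner_neg_left, real_inner_self_eq_norm_sq]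
      have hnn : 0 ≤ w i * w j * ξ i j (‖y j - y i‖) * ‖y j - y i‖ ^ 2 :=
        mul_nonneg (mul_nonneg (mul_nonneg (hw i).le (hw j).le)
          (hξnn i j _ (norm_nonneg _))) (sq_nonneg _)
      nlinarith [hnn]
    · have hz : ξ i j (‖y j - y i‖) = 0 :=
        (hξzero i j hij _ (norm_nonneg _)).mpr (Or.inr (hy i j hij hx))
      rw [hcomb, hz]; simp
  have h2S : S + S ≤ 0 := by
    nth_rewrite 2 [hswap]
    rw [hS, ← Finset.sum_add_distrib]
    refine Finset.sum_nonpos fun i _ => ?_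
    rw [← Finset.sum_add_distrib]
    refine Finset.sum_nonpos fun j hj => ?_
    exact hpair i j (by simpa using hj)
  linarith

/-- Every equilibrium `x*` in which any two distinct agents either share an
opinion or are strictly farther apart than `qᵢⱼ` is strongly Lyapunov stable: for every
`ε > 0` there is `δ > 0` such that every global solution starting within `δ` of `x*` stays
within `ε` of `x*` for all `t ≥ 0`. -/
theorem strong_lyapunov_stability {n d : ℕ}
    (w : Fin n → ℝ) (hw : ∀ i, 0 < w i)
    (ξ : Fin n → Fin n → ℝ → ℝ)
    (hξnn : ∀ i j r, 0 ≤ r → 0 ≤ ξ i j r)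
    (hξsym : ∀ i j, i ≠ j → ξ i j = ξ j i)
    (hξcont : ∀ i j, i ≠ j → ContinuousOn (ξ i j) (Set.Ici 0))
    (q : Fin n → Fin n → ℝ)
    (hqsym : ∀ i j, i ≠ j → q i j = q j i)
    (hqpos : ∀ i j, i ≠ j → 0 < q i j)
    (hξzero : ∀ i j, i ≠ j → ∀ r, 0 ≤ r → (ξ i j r = 0 ↔ r = 0 ∨ q i j ≤ r))
    (f : (Fin n → EuclideanSpace ℝ (Fin d)) → (Fin n → EuclideanSpace ℝ (Fin d)))
    (hf : ∀ y i, f y i = ∑ j ∈ Finset.univ.filter (fun j => j ≠ i),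
        ξ i j (‖y j - y i‖) • (w j • (y j - y i)))
    (xstar : Fin n → EuclideanSpace ℝ (Fin d))
    (hstar : ∀ i j, i ≠ j → xstar i = xstar j ∨ q i j < ‖xstar i - xstar j‖) :
    ∀ ε > 0, ∃ δ > 0, ∀ x : ℝ → Fin n → EuclideanSpace ℝ (Fin d),
      (∀ t, 0 ≤ t → HasDerivAt x (f (x t)) t) → ‖x 0 - xstar‖ < δ →
        ∀ t, 0 ≤ t → ‖x t - xstar‖ < ε := by
  intro ε hε
  rcases Nat.eq_zero_or_pos n with hn | hn
  · -- no agents: everything is trivial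
    refine ⟨1, one_pos, fun x _ _ t _ => ?_⟩
    have hz : x t - xstar = 0 := by
      funext i; exact absurd i.isLt (by omega)
    rw [hz, norm_zero]; exact hε
  have huniv : (Finset.univ : Finset (Fin n)).Nonempty := by
    refine ⟨⟨0, hn⟩, Finset.mem_univ _⟩
  -- a radius `r ≤ ε` keeping distinct clusters separated by more than `q i j`
  obtain ⟨r, hr0, hrε, hrsep⟩ : ∃ r > 0, r ≤ ε ∧ ∀ i j, i ≠ j → xstar i ≠ xstar j →
      q i j + 2 * r ≤ ‖xstar i - xstar j‖ := by
    classical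
    set P : Finset (Fin n × Fin n) :=
      (Finset.univ ×ˢ Finset.univ).filter
        (fun p => p.1 ≠ p.2 ∧ xstar p.1 ≠ xstar p.2) with hP
    rcases P.eq_empty_or_nonempty with hPe | hPne
    · refine ⟨ε, hε, le_refl _, fun i j hij hxs => ?_⟩
      exfalso
      have : (i, j) ∈ P := by
        rw [hP]; simp [hij, hxs]
      rw [hPe] at this; simp at this
    · obtain ⟨p₀, hp₀, hmin⟩ := P.exists_min_image
        (fun p => (‖xstar p.1 - xstar p.2‖ - q p.1 p.2) / 2) hPne
      have hp₀' : p₀.1 ≠ p₀.2 ∧ xstar p₀.1 ≠ xstar p₀.2 := by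
        rw [hP] at hp₀; simpa using hp₀
      have h0 : 0 < (‖xstar p₀.1 - xstar p₀.2‖ - q p₀.1 p₀.2) / 2 := by
        have := (hstar p₀.1 p₀.2 hp₀'.1).resolve_left hp₀'.2
        linarith
      refine ⟨min ε ((‖xstar p₀.1 - xstar p₀.2‖ - q p₀.1 p₀.2) / 2),
        lt_min hε h0, min_le_left _ _, fun i j hij hxs => ?_⟩
      have hmem : (i, j) ∈ P := by rw [hP]; simp [hij, hxs]
      have h1 := hmin (i, j) hmem
      have h2 : min ε ((‖xstar p₀.1 - xstar p₀.2‖ - q p₀.1 p₀.2) / 2)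
          ≤ (‖xstar i - xstar j‖ - q i j) / 2 :=
        le_trans (min_le_right _ _) h1
      linarith
  -- minimum and total weight
  obtain ⟨i₀, _, hi₀⟩ := Finset.exists_min_image Finset.univ w huniv
  set m := w i₀ with hm
  have hm0 : 0 < m := hw i₀
  have hmle : ∀ i, m ≤ w i := fun i => hi₀ i (Finset.mem_univ i)
  set W := ∑ i, w i with hW
  have hW0 : 0 < W := Finset.sum_pos (fun i _ => hw i) huniv
  -- choice of δ
  refine ⟨Real.sqrt (m / W) * r / 2, by positivity, fun x hx hx0 => ?_⟩
  set L := m * r ^ 2 with hL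
  have hδsq : W * (Real.sqrt (m / W) * r / 2) ^ 2 < L := by
    have hs : Real.sqrt (m / W) ^ 2 = m / W := Real.sq_sqrt (by positivity)
    have : W * (Real.sqrt (m / W) * r / 2) ^ 2 = m * r ^ 2 / 4 := by
      rw [div_pow, mul_pow, hs]; field_simp; norm_num
    rw [this, hL]; nlinarith [mul_pos hm0 (pow_pos hr0 2)]
  -- the Lyapunov function along the trajectory
  set g : ℝ → ℝ := fun t => ∑ i, w i * ‖x t i - xstar i‖ ^ 2 with hg
  -- derivative of g
  have hD : ∀ s, 0 ≤ s → HasDerivAt g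
      (∑ i, w i * (⟪x s i - xstar i, f (x s) i⟫ + ⟪f (x s) i, x s i - xstar i⟫)) s := by
    intro s hs
    rw [hg]
    refine HasDerivAt.fun_sum fun i _ => ?_
    have hxi : HasDerivAt (fun t => x t i) (f (x s) i) s :=
      hasDerivAt_pi.mp (hx s hs) i
    have hui : HasDerivAt (fun t => x t i - xstar i) (f (x s) i) s :=
      hxi.sub_const _
    have hin := (HasDerivAt.inner ℝ hui hui)
    have heq : (fun t => ⟪x t i - xstar i, x t i - xstar i⟫)
        = fun t => ‖x t i - xstar i‖ ^ 2 := by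
      funext t; rw [real_inner_self_eq_norm_sq]
    rw [heq] at hin
    exact hin.const_mul (w i)
  -- continuity of g on [0, ∞)
  have hgc : ContinuousOn g (Set.Ici 0) := fun s hs =>
    ((hD s hs).continuousAt).continuousWithinAt
  -- from a small Lyapunov value to a small norm
  have hnorm_of : ∀ s, g s < L → ‖x s - xstar‖ < r := by
    intro s hs
    rw [pi_norm_lt_iff hr0]
    intro i
    have h1 : m * ‖x s i - xstar i‖ ^ 2 ≤ g s := by
      calc m * ‖x s i - xstar i‖ ^ 2 ≤ w i * ‖x s i - xstar i‖ ^ 2 :=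
            mul_le_mul_of_nonneg_right (hmle i) (sq_nonneg _)
        _ ≤ g s :=
            Finset.single_le_sum (f := fun j => w j * ‖x s j - xstar j‖ ^ 2)
              (fun j _ => mul_nonneg (hw j).le (sq_nonneg _)) (Finset.mem_univ i)
    have h2 : ‖x s i - xstar i‖ ^ 2 < r ^ 2 := by
      rw [hL] at hs; nlinarith
    have h3 : ‖x s i - xstar i‖ < r := lt_of_pow_lt_pow_left₀ 2 hr0.le h2
    simpa using h3
  -- value of g at time 0
  have hg0 : g 0 < L := by
    have hb : ∀ i ∈ Finset.univ, w i * ‖x 0 i - xstar i‖ ^ 2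
        ≤ w i * ‖x 0 - xstar‖ ^ 2 := by
      intro i _
      refine mul_le_mul_of_nonneg_left ?_ (hw i).le
      refine pow_le_pow_left₀ (norm_nonneg _) ?_ 2
      simpa using norm_le_pi_norm (x 0 - xstar) i
    calc g 0 ≤ ∑ i, w i * ‖x 0 - xstar‖ ^ 2 := Finset.sum_le_sum hb
      _ = W * ‖x 0 - xstar‖ ^ 2 := by rw [← Finset.sum_mul]
      _ ≤ W * (Real.sqrt (m / W) * r / 2) ^ 2 := by
          refine mul_le_mul_of_nonneg_left ?_ hW0.le
          exact pow_le_pow_left₀ (norm_nonneg _) hx0.le 2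
      _ < L := hδsq
  -- derivative nonpositive whenever the solution is within r of xstar
  have hDle : ∀ s, 0 ≤ s → ‖x s - xstar‖ < r →
      (∑ i, w i * (⟪x s i - xstar i, f (x s) i⟫ + ⟪f (x s) i, x s i - xstar i⟫)) ≤ 0 := by
    intro s hs hclose
    have hy : ∀ i j, i ≠ j → xstar i ≠ xstar j → q i j ≤ ‖x s j - x s i‖ := by
      intro i j hij hxs
      have h1 : ‖x s i - xstar i‖ < r := by
        have := norm_le_pi_norm (x s - xstar) i
        simp only [Pi.sub_apply] at this
        linarith
      have h2 : ‖x s j - xstar j‖ < r := by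
        have := norm_le_pi_norm (x s - xstar) j
        simp only [Pi.sub_apply] at this
        linarith
      have h3 := hrsep i j hij hxs
      have h4 : ‖xstar i - xstar j‖ ≤ ‖xstar i - x s i‖ + ‖x s i - x s j‖ + ‖x s j - xstar j‖ := by
        simpa [dist_eq_norm] using dist_triangle4 (xstar i) (x s i) (x s j) (xstar j)
      have h5 : ‖xstar i - x s i‖ = ‖x s i - xstar i‖ := norm_sub_rev _ _
      have h6 : ‖x s i - x s j‖ = ‖x s j - x s i‖ := norm_sub_rev _ _
      linarith
    have hkey := osc_key_sum_nonpos w hw ξ hξnn hξsym q hξzero xstar (x s) hy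
    have heq : (∑ i, w i * (⟪x s i - xstar i, f (x s) i⟫ + ⟪f (x s) i, x s i - xstar i⟫))
        = 2 * ∑ i, w i * ⟪x s i - xstar i,
            ∑ j ∈ Finset.univ.filter (fun j => j ≠ i),
              ξ i j (‖x s j - x s i‖) • (w j • (x s j - x s i))⟫ := by
      rw [Finset.mul_sum]
      refine Finset.sum_congr rfl fun i _ => ?_
      rw [← hf (x s) i, real_inner_comm (f (x s) i)]
      ring
    rw [heq]
    linarith
  -- main claim: g stays below L
  have hmain : ∀ t, 0 ≤ t → g t < L := by
    by_contra hcon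
    push_neg at hcon
    obtain ⟨t₁, ht₁, hLt₁⟩ := hcon
    set S : Set ℝ := Set.Ici 0 ∩ g ⁻¹' Set.Ici L with hSdef
    have hSclosed : IsClosed S :=
      hgc.preimage_isClosed_of_isClosed isClosed_Ici isClosed_Ici
    have hSne : S.Nonempty := ⟨t₁, ht₁, hLt₁⟩
    have hbdd : BddBelow S := ⟨0, fun s hs => hs.1⟩
    set t₀ := sInf S with ht₀def
    have ht₀S : t₀ ∈ S := hSclosed.csInf_mem hSne hbdd
    have ht₀0 : 0 ≤ t₀ := ht₀S.1
    have ht₀L : L ≤ g t₀ := ht₀S.2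
    have ht₀pos : 0 < t₀ := by
      rcases eq_or_lt_of_le ht₀0 with h | h
      · exfalso; rw [← h] at ht₀L; linarith
      · exact h
    have hless : ∀ s, 0 ≤ s → s < t₀ → g s < L := by
      intro s hs hst
      have hout : s ∉ S := notMem_of_lt_csInf hst hbdd
      by_contra hge
      exact hout ⟨hs, le_of_not_gt hge⟩
    have hanti : AntitoneOn g (Set.Icc 0 t₀) := by
      refine antitoneOn_of_deriv_nonpos (convex_Icc 0 t₀)
        (hgc.mono (Set.Icc_subset_Ici_self)) ?_ ?_
      · intro s hs
        rw [interior_Icc] at hs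
        exact ((hD s hs.1.le).differentiableAt).differentiableWithinAt
      · intro s hs
        rw [interior_Icc] at hs
        rw [(hD s hs.1.le).deriv]
        exact hDle s hs.1.le (hnorm_of s (hless s hs.1.le hs.2))
    have : g t₀ ≤ g 0 :=
      hanti (Set.mem_Icc.mpr ⟨le_refl 0, ht₀0⟩) (Set.mem_Icc.mpr ⟨ht₀0, le_refl _⟩) ht₀0
    linarith
  intro t ht
  exact lt_of_lt_of_le (hnorm_of t (hmain t ht)) hrε
end

section
/- Let x* ∈ (ℝ^d)^n satisfy: for all i ≠ j, either x*_i = x*_j or |x*_i − x*_j| > q_ij, and let P be the partition of {1,…,n} determined by the equivalence i ∼ j ⟺ x*_i = x*_j. Assume ξ_ij(r) = 0 whenever r ≥ q_ij. If x ∈ (ℝ^d)^n satisfies |x_i − x_j| > q_ij whenever i and j belong to different blocks of P, then the derivative of V(y) = ∑_{i=1}^n w_i |y_i − x*_i|² along f satisfies ∑_{i=1}^n 2 w_i ⟨x_i − x*_i, f_i(x)⟩ = − ∑_{(i,j): i ∼ j} ξ_ij(|x_j − x_i|) w_i w_j |x_j − x_i|² ≤ 0. -/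
open scoped RealInnerProductSpace Classical

/-- Derivative of the Lyapunov function `V(y) = ∑ i, w i ‖y i − x*ᵢ‖²`
along the vector field, at points `x` where agents lying in different blocks of the
partition induced by `x*` are out of interaction range:
`∑ i, 2 wᵢ ⟪xᵢ − x*ᵢ, fᵢ(x)⟫ = − ∑_{(i,j) : i ∼ j} ξᵢⱼ(|xⱼ−xᵢ|) wᵢ wⱼ |xⱼ−xᵢ|² ≤ 0`. -/
theorem lyapunov_derivative_identity {n d : ℕ}
    (w : Fin n → ℝ) (hw : ∀ i, 0 < w i)
    (ξ : Fin n → Fin n → ℝ → ℝ)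
    (hξnn : ∀ i j r, 0 ≤ r → 0 ≤ ξ i j r)
    (hξsym : ∀ i j, i ≠ j → ξ i j = ξ j i)
    (q : Fin n → Fin n → ℝ)
    (hqsym : ∀ i j, i ≠ j → q i j = q j i)
    (hqpos : ∀ i j, i ≠ j → 0 < q i j)
    (hξzero : ∀ i j, i ≠ j → ∀ r, q i j ≤ r → ξ i j r = 0)
    (f : (Fin n → EuclideanSpace ℝ (Fin d)) → (Fin n → EuclideanSpace ℝ (Fin d)))
    (hf : ∀ y i, f y i = ∑ j ∈ Finset.univ.filter (fun j => j ≠ i),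
        ξ i j (‖y j - y i‖) • (w j • (y j - y i)))
    (xstar : Fin n → EuclideanSpace ℝ (Fin d))
    (hstar : ∀ i j, i ≠ j → xstar i = xstar j ∨ q i j < ‖xstar i - xstar j‖)
    (x : Fin n → EuclideanSpace ℝ (Fin d))
    (hx : ∀ i j, xstar i ≠ xstar j → q i j < ‖x i - x j‖) :
    (∑ i, 2 * w i * ⟪x i - xstar i, f x i⟫)
        = - ∑ i, ∑ j ∈ Finset.univ.filter (fun j => j ≠ i ∧ xstar i = xstar j),
            ξ i j (‖x j - x i‖) * (w i * w j) * ‖x j - x i‖ ^ 2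
      ∧ (∑ i, 2 * w i * ⟪x i - xstar i, f x i⟫) ≤ 0 := by

  classical
  set g : Fin n → Fin n → ℝ := fun i j => ξ i j (‖x j - x i‖) * (w i * w j) with hg
  set F : Fin n → Fin n → ℝ := fun i j =>
    2 * g i j * ⟪x i - xstar i, x j - x i⟫ with hF
  set S : Fin n → Finset (Fin n) :=
    fun i => Finset.univ.filter (fun j => j ≠ i ∧ xstar i = xstar j) with hS
  -- Step 1: rewrite LHS as double sum over same-block pairs
  have key : (∑ i, 2 * w i * ⟪x i - xstar i, f x i⟫) = ∑ i, ∑ j ∈ S i, F i j := by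
    refine Finset.sum_congr rfl fun i _ => ?_
    rw [hf]
    rw [inner_sum]
    rw [Finset.mul_sum]
    have split : Finset.univ.filter (fun j => j ≠ i)
        = (Finset.univ.filter (fun j => j ≠ i ∧ xstar i = xstar j)) ∪
          (Finset.univ.filter (fun j => j ≠ i ∧ xstar i ≠ xstar j)) := by
      ext j; simp [Finset.mem_filter]; tauto
    rw [split, Finset.sum_union]
    · have hz : ∑ j ∈ Finset.univ.filter (fun j => j ≠ i ∧ xstar i ≠ xstar j),
          2 * w i * ⟪x i - xstar i, ξ i j (‖x j - x i‖) • (w j • (x j - x i))⟫ = 0 := by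
        refine Finset.sum_eq_zero fun j hj => ?_
        simp only [Finset.mem_filter] at hj
        have hne : j ≠ i := hj.2.1
        have hq : q i j < ‖x i - x j‖ := hx i j hj.2.2
        have : ξ i j (‖x j - x i‖) = 0 := by
          apply hξzero i j (Ne.symm hne)
          rw [norm_sub_rev]; exact le_of_lt hq
        simp [this]
      rw [hz, add_zero]
      refine Finset.sum_congr rfl fun j hj => ?_
      simp only [hF, hg, inner_smul_right, real_inner_smul_right]
      ring
    · rw [Finset.disjoint_left]
      intro j hj hj'
      simp only [Finset.mem_filter] at hj hj'
      exact hj'.2.2 hj.2.2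
  -- symmetry of the index set
  have hmem : ∀ i j : Fin n, j ∈ S i ↔ i ∈ S j := by
    intro i j
    simp only [hS, Finset.mem_filter, Finset.mem_univ, true_and]
    constructor
    · rintro ⟨h1, h2⟩; exact ⟨h1.symm, h2.symm⟩
    · rintro ⟨h1, h2⟩; exact ⟨h1.symm, h2.symm⟩
  have swap : (∑ i, ∑ j ∈ S i, F i j) = ∑ i, ∑ j ∈ S i, F j i := by
    rw [Finset.sum_comm' (fun i j => by
      simp only [Finset.mem_univ, true_and, and_true]
      exact hmem i j : ∀ i j : Fin n, i ∈ Finset.univ ∧ j ∈ S i ↔ i ∈ S j ∧ j ∈ Finset.univ)]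
  have gsym : ∀ i j : Fin n, j ∈ S i → g i j = g j i := by
    intro i j hj
    simp only [hS, Finset.mem_filter] at hj
    simp only [hg]
    rw [hξsym j i (hj.2.1), norm_sub_rev, mul_comm (w i)]
  have pair : ∀ i j : Fin n, j ∈ S i →
      F i j + F j i = -(2 * (ξ i j (‖x j - x i‖) * (w i * w j) * ‖x j - x i‖ ^ 2)) := by
    intro i j hj
    have hstar' : xstar i = xstar j := by
      simp only [hS, Finset.mem_filter] at hj; exact hj.2.2
    have hgs := gsym i j hj
    simp only [hF]
    rw [← hgs]
    have hxx : x j - x i = (x j - xstar i) - (x i - xstar i) := by abel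
    have hinner : ⟪x i - xstar i, x j - x i⟫ + ⟪x j - xstar j, x i - x j⟫
        = -(‖x j - x i‖ ^ 2) := by
      rw [← hstar']
      set a := x i - xstar i
      set b := x j - xstar i
      have hb : x j - x i = b - a := by simp only [a, b]; abel
      have hb' : x i - x j = a - b := by simp only [a, b]; abel
      rw [hb, hb']
      have h2 : ‖b - a‖ ^ 2 = ⟪b - a, b - a⟫ := (real_inner_self_eq_norm_sq _).symm
      have h3 : a - b = -(b - a) := by abel
      rw [h3, inner_neg_right, h2]
      simp only [inner_sub_left, inner_sub_right]
      rw [real_inner_comm b a]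
      ring
    have : g i j = ξ i j (‖x j - x i‖) * (w i * w j) := rfl
    linear_combination (2 * (ξ i j (‖x j - x i‖) * (w i * w j))) * hinner
  have main : (∑ i, ∑ j ∈ S i, F i j)
      = - ∑ i, ∑ j ∈ S i, ξ i j (‖x j - x i‖) * (w i * w j) * ‖x j - x i‖ ^ 2 := by
    have h2 : 2 * (∑ i, ∑ j ∈ S i, F i j)
        = ∑ i, ∑ j ∈ S i, (F i j + F j i) := by
      simp only [Finset.sum_add_distrib]
      rw [← swap]; ring
    have h3 : ∑ i, ∑ j ∈ S i, (F i j + F j i)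
        = ∑ i, ∑ j ∈ S i, -(2 * (ξ i j (‖x j - x i‖) * (w i * w j) * ‖x j - x i‖ ^ 2)) := by
      refine Finset.sum_congr rfl fun i _ => Finset.sum_congr rfl fun j hj => pair i j hj
    have h4 := h2.trans h3
    simp only [Finset.sum_neg_distrib, ← Finset.mul_sum] at h4
    linarith [h4]
  have nonneg : 0 ≤ ∑ i, ∑ j ∈ S i, ξ i j (‖x j - x i‖) * (w i * w j) * ‖x j - x i‖ ^ 2 := by
    refine Finset.sum_nonneg fun i _ => Finset.sum_nonneg fun j _ => ?_
    have h1 := hξnn i j (‖x j - x i‖) (norm_nonneg _)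
    have h2 : (0:ℝ) ≤ w i * w j := le_of_lt (mul_pos (hw i) (hw j))
    exact mul_nonneg (mul_nonneg h1 h2) (sq_nonneg _)
  refine ⟨key.trans main, ?_⟩
  rw [key.trans main]
  linarith
end

section
/- For every component index ℓ ∈ {1,…,d}, every k ∈ ℝ, every positive integer r, and every x ∈ (ℝ^d)^n, the derivative of the shifted moment m(y) = ∑_{i=1}^n w_i (y_i^ℓ − k)^{2r} along the vector field f is nonpositive: ∑_{i=1}^n 2r w_i (x_i^ℓ − k)^{2r−1} f_i^ℓ(x) = − r ∑_{i,j} ξ_ij(|x_j − x_i|) w_i w_j [(x_j^ℓ − k)^{2r−1} − (x_i^ℓ − k)^{2r−1}] (x_j^ℓ − x_i^ℓ) ≤ 0, where f_i^ℓ(x) denotes the ℓ-th component of f_i(x). -/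
/-- For each component `ℓ`, each shift `k ∈ ℝ` and each positive integer
`r`, the derivative of the shifted even moment `m(y) = ∑ i, wᵢ (yᵢ^ℓ − k)^{2r}` along the
vector field `f` equals
`− r ∑_{i,j} ξᵢⱼ(|xⱼ−xᵢ|) wᵢ wⱼ [(xⱼ^ℓ−k)^{2r−1} − (xᵢ^ℓ−k)^{2r−1}](xⱼ^ℓ−xᵢ^ℓ)`
and is nonpositive. -/
theorem shifted_moment_dissipative {n d : ℕ}
    (w : Fin n → ℝ) (hw : ∀ i, 0 < w i)
    (ξ : Fin n → Fin n → ℝ → ℝ)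
    (hξnn : ∀ i j r, 0 ≤ r → 0 ≤ ξ i j r)
    (hξsym : ∀ i j, i ≠ j → ξ i j = ξ j i)
    (f : (Fin n → EuclideanSpace ℝ (Fin d)) → (Fin n → EuclideanSpace ℝ (Fin d)))
    (hf : ∀ y i, f y i = ∑ j ∈ Finset.univ.filter (fun j => j ≠ i),
        ξ i j (‖y j - y i‖) • (w j • (y j - y i)))
    (x : Fin n → EuclideanSpace ℝ (Fin d))
    (ℓ : Fin d) (k : ℝ) (r : ℕ) (hr : 1 ≤ r) :
    (∑ i, (2 * r : ℝ) * w i * (x i ℓ - k) ^ (2 * r - 1) * f x i ℓ)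
        = - (r : ℝ) * ∑ i, ∑ j ∈ Finset.univ.filter (fun j => j ≠ i),
            ξ i j (‖x j - x i‖) * (w i * w j) *
              (((x j ℓ - k) ^ (2 * r - 1) - (x i ℓ - k) ^ (2 * r - 1)) * (x j ℓ - x i ℓ))
      ∧ (∑ i, (2 * r : ℝ) * w i * (x i ℓ - k) ^ (2 * r - 1) * f x i ℓ) ≤ 0 := by
  set m := 2 * r - 1 with hm
  have hmodd : Odd m := by
    refine ⟨r - 1, ?_⟩
    omega
  set a : Fin n → ℝ := fun i => x i ℓ - k with ha
  set c : Fin n → Fin n → ℝ := fun i j => ξ i j (‖x j - x i‖) with hc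
  have hcsym : ∀ i j : Fin n, j ≠ i → c i j = c j i := by
    intro i j h
    simp only [hc]
    rw [hξsym i j (Ne.symm h), norm_sub_rev]
  have hcnn : ∀ i j, 0 ≤ c i j := fun i j => hξnn i j _ (norm_nonneg _)
  -- component formula for f
  have hcomp : ∀ i, f x i ℓ = ∑ j ∈ Finset.univ.filter (fun j => j ≠ i),
      c i j * (w j * (a j - a i)) := by
    intro i
    rw [hf]
    rw [WithLp.ofLp_sum, Finset.sum_apply]
    refine Finset.sum_congr rfl fun j hj => ?_
    have : (ξ i j (‖x j - x i‖) • w j • (x j - x i)) ℓ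
        = ξ i j (‖x j - x i‖) * (w j * (x j ℓ - x i ℓ)) := rfl
    rw [this]
    simp only [ha, hc]
    ring
  -- swap lemma
  have swap : ∀ g : Fin n → Fin n → ℝ,
      (∑ i, ∑ j ∈ Finset.univ.filter (fun j => j ≠ i), g i j)
      = ∑ i, ∑ j ∈ Finset.univ.filter (fun j => j ≠ i), g j i := by
    intro g
    simp only [Finset.sum_filter]
    rw [Finset.sum_comm]
    refine Finset.sum_congr rfl fun i _ => Finset.sum_congr rfl fun j _ => ?_
    by_cases h : j = i
    · subst h; simp
    · rw [if_pos h, if_pos (Ne.symm h)]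
  set D : ℝ := ∑ i, ∑ j ∈ Finset.univ.filter (fun j => j ≠ i),
      c i j * (w i * w j) * ((a j ^ m - a i ^ m) * (a j - a i)) with hD
  -- rewrite LHS
  have hL : (∑ i, (2 * r : ℝ) * w i * (x i ℓ - k) ^ (2 * r - 1) * f x i ℓ)
      = ∑ i, ∑ j ∈ Finset.univ.filter (fun j => j ≠ i),
          (2 * r : ℝ) * (c i j * (w i * w j) * (a i ^ m * (a j - a i))) := by
    refine Finset.sum_congr rfl fun i _ => ?_
    rw [hcomp i, Finset.mul_sum]
    refine Finset.sum_congr rfl fun j _ => ?_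
    simp only [ha]
    ring
  set S : ℝ := ∑ i, ∑ j ∈ Finset.univ.filter (fun j => j ≠ i),
      (2 * r : ℝ) * (c i j * (w i * w j) * (a i ^ m * (a j - a i))) with hS
  have hswapS : S = ∑ i, ∑ j ∈ Finset.univ.filter (fun j => j ≠ i),
      (2 * r : ℝ) * (c i j * (w i * w j) * (a j ^ m * (a i - a j))) := by
    rw [hS, swap]
    refine Finset.sum_congr rfl fun i _ => Finset.sum_congr rfl fun j hj => ?_
    rw [Finset.mem_filter] at hj
    rw [hcsym i j hj.2]
    ring
  have h2S : S + S = -(2 * r : ℝ) * D := by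
    nth_rewrite 1 [hS]
    nth_rewrite 1 [hswapS]
    rw [hD, ← Finset.sum_add_distrib, Finset.mul_sum]
    refine Finset.sum_congr rfl fun i _ => ?_
    rw [← Finset.sum_add_distrib, Finset.mul_sum]
    refine Finset.sum_congr rfl fun j _ => ?_
    ring
  have hEq : S = -(r : ℝ) * D := by linarith
  have hDnn : 0 ≤ D := by
    refine Finset.sum_nonneg fun i _ => Finset.sum_nonneg fun j _ => ?_
    have h1 : 0 ≤ (a j ^ m - a i ^ m) * (a j - a i) := by
      rcases le_total (a i) (a j) with h | h
      · have := (hmodd.strictMono_pow (R := ℝ)).monotone h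
        have h2 : (0:ℝ) ≤ a j ^ m - a i ^ m := by simpa using sub_nonneg.mpr this
        exact mul_nonneg h2 (sub_nonneg.mpr h)
      · have := (hmodd.strictMono_pow (R := ℝ)).monotone h
        have h2 : a j ^ m - a i ^ m ≤ 0 := by simpa using sub_nonpos.mpr this
        nlinarith [sub_nonpos.mpr h]
    exact mul_nonneg (mul_nonneg (hcnn i j) (mul_nonneg (hw i).le (hw j).le)) h1
  constructor
  · rw [hL, hEq, hD]
    congr 1
    refine Finset.sum_congr rfl fun i _ => Finset.sum_congr rfl fun j _ => ?_
    simp only [hc, ha]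
    ring
  · rw [hL, hEq]
    have hrpos : (0:ℝ) ≤ (r : ℝ) := by positivity
    nlinarith
end

section
/- Assume that for all i ≠ j there exists q_ij = q_ji > 0 such that ξ_ij(r) = 0 if and only if r = 0 or r ≥ q_ij. Fix k ∈ ℝ^d and a positive integer r, and let M(y) = ∑_{i=1}^n ∑_{ℓ=1}^d w_i (y_i^ℓ − k^ℓ)^{2r}. Then for every x ∈ (ℝ^d)^n the derivative of M along f satisfies ∑_{i=1}^n ∑_{ℓ=1}^d 2r w_i (x_i^ℓ − k^ℓ)^{2r−1} f_i^ℓ(x) ≤ 0, with equality if and only if x belongs to F̄ = { y ∈ (ℝ^d)^n : for all i ≠ j, y_i = y_j or |y_i − y_j| ≥ q_ij }. -/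
lemma key_mono {m : ℕ} (hm : Odd m) (s t : ℝ) :
    0 ≤ (s ^ m - t ^ m) * (s - t) ∧ ((s ^ m - t ^ m) * (s - t) = 0 ↔ s = t) := by
  have hsm := hm.strictMono_pow (R := ℝ)
  rcases lt_trichotomy s t with h | h | h
  · have h1 : s ^ m < t ^ m := hsm h
    exact ⟨by nlinarith, fun he => by nlinarith, fun he => absurd he h.ne⟩
  · simp [h]
  · have h1 : t ^ m < s ^ m := hsm h
    exact ⟨by nlinarith, fun he => by nlinarith, fun he => absurd he h.ne'⟩

lemma swap_sum {n : ℕ} (g : Fin n → Fin n → ℝ) :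
    ∑ i, ∑ j ∈ Finset.univ.filter (fun j => j ≠ i), g i j
      = ∑ i, ∑ j ∈ Finset.univ.filter (fun j => j ≠ i), g j i := by
  simp only [Finset.sum_filter]
  rw [Finset.sum_comm]
  apply Finset.sum_congr rfl
  intro i _
  apply Finset.sum_congr rfl
  intro j _
  simp [ne_comm]

/-- The function `M(y) = ∑ i, ∑ ℓ, wᵢ (yᵢ^ℓ − k^ℓ)^{2r}` is strongly
dissipative: its derivative along `f` is nonpositive at every `x`, and it vanishes exactly
when `x` lies in the set `F̄` of equilibrium configurations. -/
theorem moment_strongly_dissipative {n d : ℕ}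
    (w : Fin n → ℝ) (hw : ∀ i, 0 < w i)
    (ξ : Fin n → Fin n → ℝ → ℝ)
    (hξnn : ∀ i j r, 0 ≤ r → 0 ≤ ξ i j r)
    (hξsym : ∀ i j, i ≠ j → ξ i j = ξ j i)
    (q : Fin n → Fin n → ℝ)
    (hqsym : ∀ i j, i ≠ j → q i j = q j i)
    (hqpos : ∀ i j, i ≠ j → 0 < q i j)
    (hξzero : ∀ i j, i ≠ j → ∀ r, 0 ≤ r → (ξ i j r = 0 ↔ r = 0 ∨ q i j ≤ r))
    (f : (Fin n → EuclideanSpace ℝ (Fin d)) → (Fin n → EuclideanSpace ℝ (Fin d)))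
    (hf : ∀ y i, f y i = ∑ j ∈ Finset.univ.filter (fun j => j ≠ i),
        ξ i j (‖y j - y i‖) • (w j • (y j - y i)))
    (k : EuclideanSpace ℝ (Fin d)) (r : ℕ) (hr : 1 ≤ r)
    (x : Fin n → EuclideanSpace ℝ (Fin d)) :
    (∑ i, ∑ ℓ, (2 * r : ℝ) * w i * (x i ℓ - k ℓ) ^ (2 * r - 1) * f x i ℓ) ≤ 0
      ∧ ((∑ i, ∑ ℓ, (2 * r : ℝ) * w i * (x i ℓ - k ℓ) ^ (2 * r - 1) * f x i ℓ) = 0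
          ↔ ∀ i j, i ≠ j → x i = x j ∨ q i j ≤ ‖x i - x j‖) := by
  set m : ℕ := 2 * r - 1 with hm
  have hmodd : Odd m := ⟨r - 1, by omega⟩
  set a : Fin n → Fin d → ℝ := fun i ℓ => x i ℓ - k ℓ with ha
  set c : Fin n → Fin n → ℝ := fun i j => ξ i j (‖x j - x i‖) with hc
  -- coordinates of f
  have hfc : ∀ i ℓ, f x i ℓ = ∑ j ∈ Finset.univ.filter (fun j => j ≠ i),
      c i j * (w j * (a j ℓ - a i ℓ)) := by
    intro i ℓ
    rw [hf]
    rw [WithLp.ofLp_sum, Finset.sum_apply]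
    apply Finset.sum_congr rfl
    intro j _
    simp [hc, ha, PiLp.smul_apply, PiLp.sub_apply, smul_eq_mul]
  -- Q and P
  set Q : Fin n → Fin n → ℝ := fun i j => ∑ ℓ, (a j ℓ ^ m - a i ℓ ^ m) * (a j ℓ - a i ℓ)
    with hQ
  set P : Fin n → Fin n → ℝ := fun i j => c i j * ((w i * w j) * Q i j) with hP
  have hQnn : ∀ i j, 0 ≤ Q i j := fun i j =>
    Finset.sum_nonneg fun ℓ _ => (key_mono hmodd (a j ℓ) (a i ℓ)).1
  have hcsymm : ∀ i j, i ≠ j → c i j = c j i := by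
    intro i j hij
    simp only [hc]
    rw [hξsym i j hij, norm_sub_rev]
  -- rewrite S
  set D : Fin n → Fin n → ℝ := fun i j =>
    (2 * r : ℝ) * (c i j * ((w i * w j) * ∑ ℓ, a i ℓ ^ m * (a j ℓ - a i ℓ))) with hD
  set S := ∑ i, ∑ ℓ, (2 * r : ℝ) * w i * (x i ℓ - k ℓ) ^ (2 * r - 1) * f x i ℓ with hS
  have hSD : S = ∑ i, ∑ j ∈ Finset.univ.filter (fun j => j ≠ i), D i j := by
    simp only [hD]
    rw [hS]
    apply Finset.sum_congr rfl
    intro i _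
    simp_rw [hfc, Finset.mul_sum]
    rw [Finset.sum_comm]
    apply Finset.sum_congr rfl
    intro j _
    apply Finset.sum_congr rfl
    intro ℓ _
    simp only [ha, hm]
    ring
  have hDP : ∀ i j, i ≠ j → D i j + D j i = -((2 * r : ℝ) * P i j) := by
    intro i j hij
    have hcc : c j i = c i j := (hcsymm i j hij).symm
    have hsum : (∑ ℓ, a i ℓ ^ m * (a j ℓ - a i ℓ)) + ∑ ℓ, a j ℓ ^ m * (a i ℓ - a j ℓ)
        = -Q i j := by
      simp only [hQ, ← Finset.sum_add_distrib, ← Finset.sum_neg_distrib]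
      exact Finset.sum_congr rfl fun ℓ _ => by ring
    simp only [hD, hP, hcc]
    linear_combination (2 * (r : ℝ) * c i j * (w i * w j)) * hsum
  set T := ∑ i, ∑ j ∈ Finset.univ.filter (fun j => j ≠ i), P i j with hT
  have hSP : S = -(r : ℝ) * T := by
    have hS2 : S = ∑ i, ∑ j ∈ Finset.univ.filter (fun j => j ≠ i), D j i :=
      hSD.trans (swap_sum D)
    have key : S + S = ∑ i, ∑ j ∈ Finset.univ.filter (fun j => j ≠ i),
        -((2 * r : ℝ) * P i j) := by
      nth_rewrite 1 [hSD]
      nth_rewrite 1 [hS2]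
      rw [← Finset.sum_add_distrib]
      refine Finset.sum_congr rfl fun i _ => ?_
      rw [← Finset.sum_add_distrib]
      exact Finset.sum_congr rfl fun j hj =>
        hDP i j (Ne.symm (Finset.mem_filter.mp hj).2)
    have key2 : S + S = -((2 * r : ℝ) * T) := by
      rw [key, hT]
      simp [Finset.mul_sum]
    linear_combination (1/2) * key2
  have hPnn : ∀ i j, 0 ≤ P i j := by
    intro i j
    exact mul_nonneg (hξnn _ _ _ (norm_nonneg _))
      (mul_nonneg (mul_nonneg (hw i).le (hw j).le) (hQnn i j))
  have hTnn : 0 ≤ T :=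
    Finset.sum_nonneg fun i _ => Finset.sum_nonneg fun j _ => hPnn i j
  have hrpos : (0 : ℝ) < (r : ℝ) := by exact_mod_cast hr
  constructor
  · rw [hSP]; nlinarith
  · rw [hSP]
    have hST : -(r : ℝ) * T = 0 ↔ T = 0 := by
      constructor
      · intro h
        rcases mul_eq_zero.mp h with h | h
        · exact absurd h (by linarith)
        · exact h
      · intro h; rw [h]; ring
    rw [hST]
    have hT0 : T = 0 ↔ ∀ i j, j ≠ i → P i j = 0 := by
      rw [hT, Finset.sum_eq_zero_iff_of_nonneg
        (fun i _ => Finset.sum_nonneg fun j _ => hPnn i j)]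
      constructor
      · intro h i j hji
        have := h i (Finset.mem_univ i)
        rw [Finset.sum_eq_zero_iff_of_nonneg (fun j _ => hPnn i j)] at this
        exact this j (Finset.mem_filter.mpr ⟨Finset.mem_univ j, hji⟩)
      · intro h i _
        exact Finset.sum_eq_zero fun j hj => h i j (Finset.mem_filter.mp hj).2
    rw [hT0]
    constructor
    · intro h i j hij
      have hP0 := h i j hij.symm
      simp only [hP] at hP0
      rcases mul_eq_zero.mp hP0 with hc0 | hw0
      · have := (hξzero i j hij ‖x j - x i‖ (norm_nonneg _)).mp hc0
        rcases this with h0 | hq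
        · left
          have : x j - x i = 0 := norm_eq_zero.mp h0
          have := sub_eq_zero.mp this
          exact this.symm
        · right
          rwa [norm_sub_rev]
      · rcases mul_eq_zero.mp hw0 with hww | hQ0
        · exact absurd hww (mul_pos (hw i) (hw j)).ne'
        · left
          have hterm : ∀ ℓ ∈ Finset.univ, (a j ℓ ^ m - a i ℓ ^ m) * (a j ℓ - a i ℓ) = 0 :=
            (Finset.sum_eq_zero_iff_of_nonneg
              (fun ℓ _ => (key_mono hmodd (a j ℓ) (a i ℓ)).1)).mp hQ0
          ext ℓ
          have := (key_mono hmodd (a j ℓ) (a i ℓ)).2.mp (hterm ℓ (Finset.mem_univ ℓ))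
          simp only [ha] at this
          linarith
    · intro h i j hji
      rcases h j i hji with hxx | hq
      · have hQ0 : Q i j = 0 := by
          have : ∀ ℓ, a j ℓ = a i ℓ := fun ℓ => by simp only [ha, hxx]
          simp [hQ, this]
        simp [hP, hQ0]
      · have hc0 : c i j = 0 := by
          rw [hc]
          refine (hξzero i j hji.symm ‖x j - x i‖ (norm_nonneg _)).mpr (Or.inr ?_)
          rw [hqsym i j hji.symm]
          exact hq
        simp [hP, hc0]
end

section
/- Assume each ξ_ij is continuously differentiable on [0,∞) and that for all i ≠ j there exists q_ij = q_ji > 0 with ξ_ij(r) = 0 if and only if r = 0 or r ≥ q_ij. Then every global solution converges to an equilibrium: for every differentiable x : [0,∞) → (ℝ^d)^n with x'(t) = f(x(t)) for all t ≥ 0, there exists x* ∈ (ℝ^d)^n such that x(t) → x* as t → ∞ and f(x*) = 0 (equivalently, for all i ≠ j either x*_i = x*_j or |x*_i − x*_j| ≥ q_ij). -/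
open Filter Set intervalIntegral


/-- Antisymmetric off-diagonal sums vanish. -/
lemma sum_pairs_symm {ι M : Type*} [AddCommGroup M] [Module ℝ M]
    (s : Finset ι) [DecidableEq ι] (a : ι → ι → M) (ha : ∀ i j, i ≠ j → a i j = - a j i) :
    ∑ k ∈ s, ∑ j ∈ s.filter (fun j => j ≠ k), a k j = 0 := by
  have h := Finset.sum_comm' (s := s) (t := fun k => s.filter (fun j => j ≠ k))
    (t' := s) (s' := fun j => s.filter (fun k => k ≠ j)) (f := a)
    (by intro k j; simp only [Finset.mem_filter]; tauto)
  have h3 : ∑ k ∈ s, ∑ j ∈ s.filter (fun j => j ≠ k), a k j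
      = - ∑ k ∈ s, ∑ j ∈ s.filter (fun j => j ≠ k), a k j := by
    nth_rewrite 1 [h]
    calc ∑ j ∈ s, ∑ k ∈ s.filter (fun k => k ≠ j), a k j
        = ∑ j ∈ s, ∑ k ∈ s.filter (fun k => k ≠ j), -(a j k) :=
          Finset.sum_congr rfl (fun j _ => Finset.sum_congr rfl fun k hk =>
            ha k j (Finset.mem_filter.1 hk).2)
      _ = - ∑ j ∈ s, ∑ k ∈ s.filter (fun k => k ≠ j), a j k := by
          simp [Finset.sum_neg_distrib]
  have h4 : (2:ℝ) • (∑ k ∈ s, ∑ j ∈ s.filter (fun j => j ≠ k), a k j) = 0 := by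
    rw [two_smul]; nth_rewrite 1 [h3]; abel
  simpa using (smul_eq_zero.1 h4).resolve_left (by norm_num)

/-- Lipschitz + bound on `[0,K]` from `C¹` on `[0,∞)`. -/
lemma lip_of_contDiffOn {f : ℝ → ℝ} (hf : ContDiffOn ℝ 1 f (Set.Ici 0)) (K : ℝ) :
    ∃ C, 0 < C ∧ (∀ a ∈ Set.Icc (0:ℝ) K, |f a| ≤ C) ∧
      ∀ a ∈ Set.Icc (0:ℝ) K, ∀ b ∈ Set.Icc (0:ℝ) K, |f b - f a| ≤ C * |b - a| := by
  have hsub : Set.Icc (0:ℝ) K ⊆ Set.Ici 0 := fun y hy => hy.1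
  have hdOn : DifferentiableOn ℝ f (Set.Ici 0) := hf.differentiableOn one_ne_zero
  have hcd : ContinuousOn (derivWithin f (Set.Ici 0)) (Set.Ici 0) :=
    hf.continuousOn_derivWithin (uniqueDiffOn_Ici 0) le_rfl
  obtain ⟨C1, hC1⟩ := (isCompact_Icc (a := (0:ℝ)) (b := K)).exists_bound_of_continuousOn
    (hcd.mono hsub)
  obtain ⟨C2, hC2⟩ := (isCompact_Icc (a := (0:ℝ)) (b := K)).exists_bound_of_continuousOn
    ((hf.continuousOn).mono hsub)
  refine ⟨max (max C1 C2) 0 + 1, by positivity, ?_, ?_⟩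
  · intro a ha
    have := hC2 a ha
    rw [Real.norm_eq_abs] at this
    have h1 : C2 ≤ max (max C1 C2) 0 := le_trans (le_max_right C1 C2) (le_max_left _ _)
    linarith
  · intro a ha b hb
    have key := Convex.norm_image_sub_le_of_norm_hasDerivWithin_le
      (f := f) (f' := derivWithin f (Set.Ici 0)) (s := Set.Icc 0 K) (C := max (max C1 C2) 0 + 1)
      (fun y hy => ((hdOn y (hsub hy)).hasDerivWithinAt).mono hsub)
      (fun y hy => by
        have := hC1 y hy
        rw [Real.norm_eq_abs] at this
        have h1 : C1 ≤ max (max C1 C2) 0 := le_trans (le_max_left C1 C2) (le_max_left _ _)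
        simp only [Real.norm_eq_abs]; linarith)
      (convex_Icc 0 K) ha hb
    simpa [Real.norm_eq_abs] using key


lemma tendsto_of_cauchy_control {E : Type*} [NormedAddCommGroup E] [CompleteSpace E]
    {m : ℝ → E} {G : ℝ → ℝ} {T0 B : ℝ}
    (h : ∀ t1 t2, T0 ≤ t1 → t1 ≤ t2 → ‖m t2 - m t1‖ ≤ G t2 - G t1)
    (hB : ∀ t, T0 ≤ t → G t ≤ B) :
    ∃ l, Filter.Tendsto m Filter.atTop (nhds l) := by
  have hmono : ∀ t1 t2, T0 ≤ t1 → t1 ≤ t2 → G t1 ≤ G t2 := by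
    intro t1 t2 h1 h2
    have := h t1 t2 h1 h2
    have h0 : (0:ℝ) ≤ ‖m t2 - m t1‖ := norm_nonneg _
    linarith
  have hcauchy : Cauchy (Filter.map m Filter.atTop) := by
    rw [Metric.cauchy_iff]
    refine ⟨Filter.map_neBot, fun ε hε => ?_⟩
    set S : Set ℝ := G '' Set.Ici T0 with hS
    have hSne : S.Nonempty := ⟨G T0, ⟨T0, Set.mem_Ici.2 le_rfl, rfl⟩⟩
    have hSbdd : BddAbove S := ⟨B, by rintro _ ⟨t, ht, rfl⟩; exact hB t ht⟩
    set c := sSup S with hc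
    obtain ⟨_, ⟨ts, hts, rfl⟩, hgt⟩ := exists_lt_of_lt_csSup hSne
      (show c - ε/2 < c by linarith)
    refine ⟨m '' Set.Ici ts, Filter.image_mem_map (Filter.Ici_mem_atTop ts), ?_⟩
    rintro _ ⟨a, ha, rfl⟩ _ ⟨b, hb, rfl⟩
    have key : ∀ a b : ℝ, ts ≤ a → a ≤ b → dist (m a) (m b) < ε := by
      intro a b ha hab
      rw [dist_comm, dist_eq_norm]
      have h1 := h a b (le_trans hts ha) hab
      have h2 : G a ≥ G ts := hmono ts a hts ha
      have h3 : G b ≤ c := le_csSup hSbdd ⟨b, le_trans hts (le_trans ha hab), rfl⟩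
      linarith
    rcases le_total a b with hab | hab
    · exact key a b ha hab
    · rw [dist_comm]; exact key b a hb hab
  obtain ⟨l, hl⟩ := CompleteSpace.complete hcauchy
  exact ⟨l, hl⟩

lemma barbalat {g : ℝ → ℝ} {L B : ℝ} (hL : 0 < L)
    (hg0 : ∀ t, 0 ≤ t → 0 ≤ g t)
    (hlip : ∀ s t, 0 ≤ s → 0 ≤ t → |g t - g s| ≤ L * |t - s|)
    (hB : ∀ T, 0 ≤ T → (∫ u in (0:ℝ)..T, g u) ≤ B) :
    Filter.Tendsto g Filter.atTop (nhds 0) := by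
  have hcont : ContinuousOn g (Set.Ici 0) := by
    refine LipschitzOnWith.continuousOn (K := L.toNNReal) ?_
    rw [lipschitzOnWith_iff_dist_le_mul]
    intro a ha b hb
    simpa [Real.dist_eq, Real.coe_toNNReal L hL.le] using hlip b a hb ha
  have hint : ∀ a b : ℝ, 0 ≤ a → a ≤ b → IntervalIntegrable g MeasureTheory.volume a b := by
    intro a b ha hab
    refine (hcont.mono ?_).intervalIntegrable
    rw [Set.uIcc_of_le hab]
    exact fun y hy => le_trans ha hy.1
  by_contra hnot
  rw [Metric.tendsto_atTop] at hnot
  push_neg at hnot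
  obtain ⟨ε, hε, hfreq⟩ := hnot
  set δ := ε / (2 * L) with hδ
  have hδpos : 0 < δ := by positivity
  have step : ∀ T, 0 ≤ T → ∃ T', T ≤ T' ∧ 0 ≤ T' ∧
      (∫ u in (0:ℝ)..T, g u) + δ * (ε/2) ≤ ∫ u in (0:ℝ)..T', g u := by
    intro T hT
    obtain ⟨t, ht, hgt⟩ := hfreq (T + δ)
    have htT : T + δ ≤ t := ht
    have ht0 : 0 ≤ t - δ := by linarith
    have hgtε : ε ≤ g t := by
      have : dist (g t) 0 = |g t| := by simp [Real.dist_eq]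
      rw [this, abs_of_nonneg (hg0 t (by linarith))] at hgt
      exact hgt
    -- g ≥ ε/2 on [t - δ, t]
    have hlow : ∀ u ∈ Set.Icc (t - δ) t, ε/2 ≤ g u := by
      intro u hu
      have h1 := hlip u t (by linarith [hu.1]) (by linarith)
      have h2 : |t - u| ≤ δ := by
        rw [abs_of_nonneg (by linarith [hu.2])]
        linarith [hu.1]
      have h3 : |g t - g u| ≤ L * δ := le_trans h1 (by nlinarith [hu.2])
      have h4 : L * δ = ε / 2 := by rw [hδ, mul_div_assoc', div_eq_div_iff (by positivity) (by norm_num)]; ring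
      rw [h4] at h3
      have := abs_le.1 h3
      linarith [this.1]
    refine ⟨t, by linarith, by linarith, ?_⟩
    have hsplit : (∫ u in (0:ℝ)..(t-δ), g u) + (∫ u in (t-δ)..t, g u)
        = ∫ u in (0:ℝ)..t, g u :=
      integral_add_adjacent_intervals (hint 0 (t-δ) le_rfl ht0)
        (hint (t-δ) t ht0 (by linarith))
    have hsplit2 : (∫ u in (0:ℝ)..T, g u) + (∫ u in T..(t-δ), g u)
        = ∫ u in (0:ℝ)..(t-δ), g u :=
      integral_add_adjacent_intervals (hint 0 T le_rfl hT)
        (hint T (t-δ) hT (by linarith))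
    have h5 : (0:ℝ) ≤ ∫ u in T..(t-δ), g u :=
      intervalIntegral.integral_nonneg (by linarith) (fun u hu => hg0 u (le_trans hT hu.1))
    have h6 : δ * (ε/2) ≤ ∫ u in (t-δ)..t, g u := by
      have hc := intervalIntegral.integral_mono_on (a := t - δ) (b := t)
        (f := fun _ => ε/2) (g := g) (by linarith)
        intervalIntegrable_const (hint (t-δ) t ht0 (by linarith)) hlow
      calc δ * (ε/2) = ε * δ / 2 := by ring
        _ ≤ _ := by simpa [mul_comm] using hc
    linarith
  have grow : ∀ N : ℕ, ∃ T, 0 ≤ T ∧ (N : ℝ) * (δ * (ε/2)) ≤ ∫ u in (0:ℝ)..T, g u := by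
    intro N
    induction N with
    | zero => exact ⟨0, le_rfl, by simp⟩
    | succ k ih =>
      obtain ⟨T, hT, hTb⟩ := ih
      obtain ⟨T', _, hT'0, hT'b⟩ := step T hT
      refine ⟨T', hT'0, ?_⟩
      push_cast
      linarith
  obtain ⟨N, hN⟩ := exists_nat_gt (B / (δ * (ε/2)))
  obtain ⟨T, hT, hTb⟩ := grow N
  have := hB T hT
  have hpos : 0 < δ * (ε/2) := by positivity
  rw [div_lt_iff₀ hpos] at hN
  linarith
set_option maxHeartbeats 1600000 in
/-- When the interaction functions are `C¹` on `[0,∞)` and vanish exactly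
at `0` and beyond the thresholds `qᵢⱼ`, every global solution converges, as `t → ∞`, to an
equilibrium `x*` (a point with `f(x*) = 0`, equivalently any two distinct agents either
agree or are at distance at least `qᵢⱼ`). -/
theorem trajectory_converges_to_equilibrium {n d : ℕ}
    (w : Fin n → ℝ) (hw : ∀ i, 0 < w i)
    (ξ : Fin n → Fin n → ℝ → ℝ)
    (hξnn : ∀ i j r, 0 ≤ r → 0 ≤ ξ i j r)
    (hξsym : ∀ i j, i ≠ j → ξ i j = ξ j i)
    (hξC1 : ∀ i j, i ≠ j → ContDiffOn ℝ 1 (ξ i j) (Set.Ici 0))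
    (q : Fin n → Fin n → ℝ)
    (hqsym : ∀ i j, i ≠ j → q i j = q j i)
    (hqpos : ∀ i j, i ≠ j → 0 < q i j)
    (hξzero : ∀ i j, i ≠ j → ∀ r, 0 ≤ r → (ξ i j r = 0 ↔ r = 0 ∨ q i j ≤ r))
    (f : (Fin n → EuclideanSpace ℝ (Fin d)) → (Fin n → EuclideanSpace ℝ (Fin d)))
    (hf : ∀ y i, f y i = ∑ j ∈ Finset.univ.filter (fun j => j ≠ i),
        ξ i j (‖y j - y i‖) • (w j • (y j - y i)))
    (x : ℝ → Fin n → EuclideanSpace ℝ (Fin d))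
    (hx : ∀ t, 0 ≤ t → HasDerivAt x (f (x t)) t) :
    ∃ xstar : Fin n → EuclideanSpace ℝ (Fin d),
      Filter.Tendsto x Filter.atTop (nhds xstar) ∧ f xstar = 0 ∧
        ∀ i j, i ≠ j → xstar i = xstar j ∨ q i j ≤ ‖xstar i - xstar j‖ := by
  classical
  rcases Nat.eq_zero_or_pos n with hn | hn
  · subst hn
    haveI : Subsingleton (Fin 0 → EuclideanSpace ℝ (Fin d)) :=
      ⟨fun a b => funext fun i => i.elim0⟩
    refine ⟨x 0, ?_, Subsingleton.elim _ _, fun i => i.elim0⟩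
    have hxx : x = fun _ => x 0 := funext fun t => Subsingleton.elim _ _
    rw [hxx]; exact tendsto_const_nhds
  haveI : Nonempty (Fin n) := ⟨⟨0, hn⟩⟩
  -- basic notation
  set r : Fin n → Fin n → ℝ → ℝ := fun i j t => ‖x t j - x t i‖ with hrdef
  have hr0 : ∀ i j t, 0 ≤ r i j t := fun i j t => norm_nonneg _
  have hrsymm : ∀ i j t, r i j t = r j i t := fun i j t => norm_sub_rev _ _
  have hxi : ∀ (i : Fin n) (t : ℝ), 0 ≤ t → HasDerivAt (fun s => x s i) (f (x t) i) t :=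
    fun i t ht => (hasDerivAt_pi.1 (hx t ht)) i
  have hxc : ∀ i, ContinuousOn (fun s => x s i) (Set.Ici 0) :=
    fun i t ht => ((hxi i t ht).continuousAt).continuousWithinAt
  have hrc : ∀ i j, ContinuousOn (r i j) (Set.Ici 0) :=
    fun i j => ((hxc j).sub (hxc i)).norm
  have hu' : ∀ (i j : Fin n) (t : ℝ), 0 ≤ t →
      HasDerivAt (fun s => x s j - x s i) (f (x t) j - f (x t) i) t :=
    fun i j t ht => (hxi j t ht).sub (hxi i t ht)
  -- energy and dissipation
  set En : ℝ → ℝ := fun t => ∑ i, w i * (inner ℝ (x t i) (x t i) : ℝ) with hEndef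
  set D : ℝ → ℝ := fun t => ∑ i, ∑ j ∈ Finset.univ.filter (fun j => j ≠ i),
      (w i * w j) * (ξ i j (r i j t) * (r i j t)^2) with hDdef
  have hD0 : ∀ t, 0 ≤ D t := by
    intro t
    refine Finset.sum_nonneg fun i _ => Finset.sum_nonneg fun j _ => ?_
    have h1 := hξnn i j (r i j t) (hr0 i j t)
    have h2 := (hw i).le
    have h3 := (hw j).le
    have h4 := hr0 i j t
    positivity
  have hEnn : ∀ t, 0 ≤ En t := by
    intro t
    refine Finset.sum_nonneg fun i _ => ?_
    have : (0:ℝ) ≤ (inner ℝ (x t i) (x t i) : ℝ) := real_inner_self_nonneg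
    have := (hw i).le
    positivity
  have hEn' : ∀ t, 0 ≤ t → HasDerivAt En (-(D t)) t := by
    intro t ht
    have hsum : HasDerivAt (fun s => ∑ i, w i * (inner ℝ (x s i) (x s i) : ℝ))
        (∑ i, w i * ((inner ℝ (x t i) (f (x t) i) : ℝ) + (inner ℝ (f (x t) i) (x t i) : ℝ))) t :=
      HasDerivAt.fun_sum (fun i _ =>
        (HasDerivAt.inner ℝ (hxi i t ht) (hxi i t ht)).const_mul (w i))
    rw [hEndef]
    convert hsum using 1
    have expand : ∀ i : Fin n,
        w i * ((inner ℝ (x t i) (f (x t) i) : ℝ) + (inner ℝ (f (x t) i) (x t i) : ℝ))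
        = ∑ j ∈ Finset.univ.filter (fun j => j ≠ i),
            2 * (ξ i j (r i j t) * ((w i * w j) * (inner ℝ (x t i) (x t j - x t i) : ℝ))) := by
      intro i
      have hcomm : (inner ℝ (f (x t) i) (x t i) : ℝ) = (inner ℝ (x t i) (f (x t) i) : ℝ) :=
        real_inner_comm _ _
      rw [hcomm, hf, inner_sum, ← two_mul, Finset.mul_sum, Finset.mul_sum]
      refine Finset.sum_congr rfl fun j hj => ?_
      rw [real_inner_smul_right, real_inner_smul_right]
      ring
    rw [Finset.sum_congr rfl (fun i _ => expand i)]
    set a : Fin n → Fin n → ℝ := fun i j =>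
      2 * (ξ i j (r i j t) * ((w i * w j) * (inner ℝ (x t i) (x t j - x t i) : ℝ)))
        + (w i * w j) * (ξ i j (r i j t) * (r i j t)^2) with hadef
    have ha : ∀ i j : Fin n, i ≠ j → a i j = - a j i := by
      intro i j hij
      have hinner : (inner ℝ (x t i) (x t j - x t i) : ℝ) + (inner ℝ (x t j) (x t i - x t j) : ℝ)
          = -(r i j t)^2 := by
        have h1 : (r i j t)^2 = (inner ℝ (x t j - x t i) (x t j - x t i) : ℝ) := by
          rw [real_inner_self_eq_norm_sq]
        rw [h1]
        simp only [inner_sub_left, inner_sub_right]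
        rw [real_inner_comm (x t j) (x t i)]
        ring
      simp only [hadef]
      rw [show ξ j i = ξ i j from (hξsym i j hij).symm, show r j i t = r i j t from (hrsymm i j t).symm]
      linear_combination (2 * ξ i j (r i j t) * (w i * w j)) * hinner
    have hzero := sum_pairs_symm Finset.univ a ha
    have hsplit : ∑ i, ∑ j ∈ Finset.univ.filter (fun j => j ≠ i), a i j
        = (∑ i, ∑ j ∈ Finset.univ.filter (fun j => j ≠ i),
            2 * (ξ i j (r i j t) * ((w i * w j) * (inner ℝ (x t i) (x t j - x t i) : ℝ))))
          + D t := by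
      rw [hDdef, ← Finset.sum_add_distrib]
      refine Finset.sum_congr rfl fun i _ => ?_
      rw [← Finset.sum_add_distrib]
    rw [hzero] at hsplit
    linarith [hsplit]
  have hEcont : ContinuousOn En (Set.Ici 0) :=
    fun t ht => ((hEn' t ht).continuousAt).continuousWithinAt
  have hDcont : ContinuousOn D (Set.Ici 0) := by
    refine continuousOn_finset_sum _ fun i _ => continuousOn_finset_sum _ fun j hj => ?_
    have hj' : j ≠ i := by simpa using (Finset.mem_filter.1 hj).2
    have hξc : ContinuousOn (ξ i j) (Set.Ici 0) := (hξC1 i j (Ne.symm hj')).continuousOn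
    exact (continuousOn_const.mul ((hξc.comp (hrc i j) (fun t _ => hr0 i j t)).mul
      ((hrc i j).pow 2)))
  have hEle : ∀ t, 0 ≤ t → En t ≤ En 0 := by
    have hanti : AntitoneOn En (Set.Ici 0) := by
      refine antitoneOn_of_deriv_nonpos (convex_Ici 0) hEcont ?_ ?_
      · intro t ht
        rw [interior_Ici] at ht
        exact ((hEn' t (le_of_lt ht)).differentiableAt).differentiableWithinAt
      · intro t ht
        rw [interior_Ici] at ht
        rw [(hEn' t (le_of_lt ht)).deriv]
        simpa using hD0 t
    intro t ht
    exact hanti (Set.mem_Ici.2 le_rfl) (Set.mem_Ici.2 ht) ht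
  -- uniform bound on the trajectory
  obtain ⟨R, hR0, hbound⟩ : ∃ R, 0 ≤ R ∧ ∀ t, 0 ≤ t → ∀ i, ‖x t i‖ ≤ R := by
    set wmin : ℝ := Finset.univ.inf' Finset.univ_nonempty w with hwmindef
    have hwminpos : 0 < wmin := by
      obtain ⟨i, _, hi⟩ := Finset.exists_mem_eq_inf' Finset.univ_nonempty w
      rw [hwmindef, hi]
      exact hw i
    refine ⟨Real.sqrt (En 0 / wmin), Real.sqrt_nonneg _, ?_⟩
    intro t ht i
    have h1 : w i * (inner ℝ (x t i) (x t i) : ℝ) ≤ En t := by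
      rw [hEndef]
      refine Finset.single_le_sum (f := fun k => w k * (inner ℝ (x t k) (x t k) : ℝ))
        (fun k _ => ?_) (Finset.mem_univ i)
      have h5 : (0:ℝ) ≤ (inner ℝ (x t k) (x t k) : ℝ) := real_inner_self_nonneg
      have h6 := (hw k).le
      positivity
    have h2 : (inner ℝ (x t i) (x t i) : ℝ) = ‖x t i‖^2 := real_inner_self_eq_norm_sq (x t i)
    have h3 : ‖x t i‖^2 ≤ En 0 / wmin := by
      have hEt := hEle t ht
      have hwi : wmin ≤ w i := Finset.inf'_le w (Finset.mem_univ i)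
      rw [le_div_iff₀ hwminpos]
      nlinarith [sq_nonneg (‖x t i‖), hw i]
    calc ‖x t i‖ = Real.sqrt (‖x t i‖^2) := (Real.sqrt_sq (norm_nonneg _)).symm
    _ ≤ Real.sqrt (En 0 / wmin) := Real.sqrt_le_sqrt h3
  have hrbound : ∀ i j t, 0 ≤ t → r i j t ≤ 2*R := by
    intro i j t ht
    calc r i j t ≤ ‖x t j‖ + ‖x t i‖ := norm_sub_le _ _
    _ ≤ 2*R := by have := hbound t ht j; have := hbound t ht i; linarith
  set K : ℝ := 2*R + 1 with hKdef
  have hrIcc : ∀ i j t, 0 ≤ t → r i j t ∈ Set.Icc (0:ℝ) K := by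
    intro i j t ht
    exact ⟨hr0 i j t, by have := hrbound i j t ht; simp only [hKdef]; linarith⟩
  -- uniform bound and Lipschitz constant for all ξ i j on [0, K]
  obtain ⟨C, hC0, hCb, hClip⟩ : ∃ C, 0 < C ∧
      (∀ i j, i ≠ j → ∀ a ∈ Set.Icc (0:ℝ) K, |ξ i j a| ≤ C) ∧
      (∀ i j, i ≠ j → ∀ a ∈ Set.Icc (0:ℝ) K, ∀ b ∈ Set.Icc (0:ℝ) K,
        |ξ i j b - ξ i j a| ≤ C * |b - a|) := by
    have hpair : ∀ p : Fin n × Fin n, ∃ C, 0 < C ∧ (p.1 ≠ p.2 →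
        (∀ a ∈ Set.Icc (0:ℝ) K, |ξ p.1 p.2 a| ≤ C) ∧
        (∀ a ∈ Set.Icc (0:ℝ) K, ∀ b ∈ Set.Icc (0:ℝ) K,
          |ξ p.1 p.2 b - ξ p.1 p.2 a| ≤ C * |b - a|)) := by
      intro p
      by_cases hp : p.1 ≠ p.2
      · obtain ⟨C, hC, h1, h2⟩ := lip_of_contDiffOn (hξC1 p.1 p.2 hp) K
        exact ⟨C, hC, fun _ => ⟨h1, h2⟩⟩
      · exact ⟨1, one_pos, fun h => absurd h hp⟩
    choose Cp hCp0 hCp using hpair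
    refine ⟨Finset.univ.sup' Finset.univ_nonempty Cp, ?_, ?_, ?_⟩
    · obtain ⟨p⟩ := (inferInstance : Nonempty (Fin n × Fin n))
      exact lt_of_lt_of_le (hCp0 p) (Finset.le_sup' Cp (Finset.mem_univ p))
    · intro i j hij a ha
      exact le_trans ((hCp (i,j) hij).1 a ha) (Finset.le_sup' Cp (Finset.mem_univ (i,j)))
    · intro i j hij a ha b hb
      refine le_trans ((hCp (i,j) hij).2 a ha b hb) ?_
      exact mul_le_mul_of_nonneg_right (Finset.le_sup' Cp (Finset.mem_univ (i,j))) (abs_nonneg _)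
  -- bound on the vector field along the trajectory
  obtain ⟨F, hF0, hFb⟩ : ∃ F, 0 < F ∧ ∀ t, 0 ≤ t → ∀ i, ‖f (x t) i‖ ≤ F := by
    set Wmax : ℝ := Finset.univ.sup' Finset.univ_nonempty w with hWmaxdef
    have hWmaxpos : 0 < Wmax := by
      obtain ⟨i⟩ := (inferInstance : Nonempty (Fin n))
      exact lt_of_lt_of_le (hw i) (Finset.le_sup' w (Finset.mem_univ i))
    refine ⟨(n : ℝ) * (C * (Wmax * (2*R))) + 1, ?_, ?_⟩
    · have : (0:ℝ) ≤ (n : ℝ) * (C * (Wmax * (2*R))) := by positivity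
      linarith
    intro t ht i
    rw [hf]
    calc ‖∑ j ∈ Finset.univ.filter (fun j => j ≠ i),
            ξ i j (‖x t j - x t i‖) • (w j • (x t j - x t i))‖
        ≤ ∑ j ∈ Finset.univ.filter (fun j => j ≠ i),
            ‖ξ i j (‖x t j - x t i‖) • (w j • (x t j - x t i))‖ := norm_sum_le _ _
    _ ≤ ∑ _j ∈ Finset.univ.filter (fun j => j ≠ i), C * (Wmax * (2*R)) := by
        refine Finset.sum_le_sum fun j hj => ?_
        have hj' : j ≠ i := by simpa using (Finset.mem_filter.1 hj).2
        rw [norm_smul, norm_smul, Real.norm_eq_abs, Real.norm_eq_abs]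
        have e1 : |ξ i j (‖x t j - x t i‖)| ≤ C :=
          hCb i j (Ne.symm hj') _ (hrIcc i j t ht)
        have e2 : |w j| ≤ Wmax := by
          rw [abs_of_nonneg (hw j).le]
          exact Finset.le_sup' w (Finset.mem_univ j)
        have e3 : ‖x t j - x t i‖ ≤ 2*R := hrbound i j t ht
        have e4 : (0:ℝ) ≤ |w j| := abs_nonneg _
        have e5 : (0:ℝ) ≤ ‖x t j - x t i‖ := norm_nonneg _
        calc |ξ i j (‖x t j - x t i‖)| * (|w j| * ‖x t j - x t i‖)
            ≤ C * (|w j| * ‖x t j - x t i‖) :=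
              mul_le_mul_of_nonneg_right e1 (by positivity)
          _ ≤ C * (Wmax * (2*R)) := by
              refine mul_le_mul_of_nonneg_left ?_ hC0.le
              exact mul_le_mul e2 e3 e5 hWmaxpos.le
    _ ≤ (n : ℝ) * (C * (Wmax * (2*R))) + 1 := by
        rw [Finset.sum_const, nsmul_eq_mul]
        have hcard : ((Finset.univ.filter (fun j => j ≠ i)).card : ℝ) ≤ (n : ℝ) := by
          have := Finset.card_filter_le (Finset.univ : Finset (Fin n)) (fun j => j ≠ i)
          have h2 : (Finset.univ : Finset (Fin n)).card = n := by simp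
          exact_mod_cast h2 ▸ this
        have hnn : (0:ℝ) ≤ C * (Wmax * (2*R)) := by positivity
        nlinarith
  -- r is Lipschitz along the trajectory
  have hrlip : ∀ i j, ∀ s t, 0 ≤ s → 0 ≤ t → |r i j t - r i j s| ≤ (2*F) * |t - s| := by
    intro i j s t hs ht
    have key := Convex.norm_image_sub_le_of_norm_hasDerivWithin_le
      (f := fun u => x u j - x u i) (f' := fun u => f (x u) j - f (x u) i)
      (s := Set.Ici 0) (C := 2*F)
      (fun u hu => ((hu' i j u hu).hasDerivWithinAt))
      (fun u hu => by
        calc ‖f (x u) j - f (x u) i‖ ≤ ‖f (x u) j‖ + ‖f (x u) i‖ := norm_sub_le _ _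
        _ ≤ 2*F := by have := hFb u hu j; have := hFb u hu i; linarith)
      (convex_Ici 0) hs ht
    have h2 : |r i j t - r i j s| ≤ ‖(x t j - x t i) - (x s j - x s i)‖ :=
      abs_norm_sub_norm_le _ _
    rw [Real.norm_eq_abs] at key
    exact le_trans h2 key
  -- dissipation integral bound
  have hDIbound : ∀ T, 0 ≤ T → (∫ u in (0:ℝ)..T, D u) ≤ En 0 := by
    intro T hT
    have hFTC : (∫ u in (0:ℝ)..T, -(D u)) = En T - En 0 := by
      refine integral_eq_sub_of_hasDerivAt (fun u hu => ?_) ?_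
      · refine hEn' u ?_
        rw [Set.uIcc_of_le hT] at hu; exact hu.1
      · refine ContinuousOn.intervalIntegrable ?_
        refine (hDcont.mono ?_).neg
        rw [Set.uIcc_of_le hT]; exact fun y hy => hy.1
    rw [intervalIntegral.integral_neg] at hFTC
    have := hEnn T
    linarith
  have hK0 : (0:ℝ) < K := by rw [hKdef]; linarith
  -- continuity of per-pair interaction terms
  have hdcont : ∀ i j, i ≠ j →
      ContinuousOn (fun t => ξ i j (r i j t) * (r i j t)^2) (Set.Ici 0) := by
    intro i j hij
    exact ((hξC1 i j hij).continuousOn.comp (hrc i j) (fun t _ => hr0 i j t)).mul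
      ((hrc i j).pow 2)
  -- integral bound for per-pair interaction terms
  have hdint : ∀ i j, i ≠ j → ∀ a b, 0 ≤ a → a ≤ b →
      (∫ u in a..b, ξ i j (r i j u) * (r i j u)^2) ≤ En 0 / (w i * w j) := by
    intro i j hij a b ha hab
    have hb0 : 0 ≤ b := le_trans ha hab
    have hci : ∀ a' b' : ℝ, 0 ≤ a' → a' ≤ b' →
        IntervalIntegrable (fun u => ξ i j (r i j u) * (r i j u)^2)
          MeasureTheory.volume a' b' := by
      intro a' b' ha' hab'
      refine ((hdcont i j hij).mono ?_).intervalIntegrable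
      rw [Set.uIcc_of_le hab']; exact fun y hy => le_trans ha' hy.1
    have hcD : ∀ a' b' : ℝ, 0 ≤ a' → a' ≤ b' →
        IntervalIntegrable D MeasureTheory.volume a' b' := by
      intro a' b' ha' hab'
      refine (hDcont.mono ?_).intervalIntegrable
      rw [Set.uIcc_of_le hab']; exact fun y hy => le_trans ha' hy.1
    have hnonneg : ∀ u, 0 ≤ u → 0 ≤ ξ i j (r i j u) * (r i j u)^2 := by
      intro u hu
      have := hξnn i j (r i j u) (hr0 i j u)
      positivity
    have hsplit : (∫ u in (0:ℝ)..a, ξ i j (r i j u) * (r i j u)^2)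
        + (∫ u in a..b, ξ i j (r i j u) * (r i j u)^2)
        = ∫ u in (0:ℝ)..b, ξ i j (r i j u) * (r i j u)^2 :=
      integral_add_adjacent_intervals (hci 0 a le_rfl ha) (hci a b ha hab)
    have h0a : (0:ℝ) ≤ ∫ u in (0:ℝ)..a, ξ i j (r i j u) * (r i j u)^2 :=
      intervalIntegral.integral_nonneg ha (fun u hu => hnonneg u hu.1)
    have hmono : ∀ u ∈ Set.Icc (0:ℝ) b, (w i * w j) * (ξ i j (r i j u) * (r i j u)^2) ≤ D u := by
      intro u hu
      rw [hDdef]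
      calc (w i * w j) * (ξ i j (r i j u) * (r i j u)^2)
          ≤ ∑ l ∈ Finset.univ.filter (fun l => l ≠ i),
              (w i * w l) * (ξ i l (r i l u) * (r i l u)^2) := by
            refine Finset.single_le_sum (f := fun l => (w i * w l) * (ξ i l (r i l u) * (r i l u)^2))
              (fun l _ => ?_) (Finset.mem_filter.2 ⟨Finset.mem_univ j, Ne.symm hij⟩)
            have := hξnn i l (r i l u) (hr0 i l u)
            have h7 := (hw i).le; have h8 := (hw l).le; have h9 := hr0 i l u
            positivity
        _ ≤ ∑ k, ∑ l ∈ Finset.univ.filter (fun l => l ≠ k),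
              (w k * w l) * (ξ k l (r k l u) * (r k l u)^2) := by
            refine Finset.single_le_sum
              (f := fun k => ∑ l ∈ Finset.univ.filter (fun l => l ≠ k),
                (w k * w l) * (ξ k l (r k l u) * (r k l u)^2))
              (fun k _ => ?_) (Finset.mem_univ i)
            refine Finset.sum_nonneg fun l _ => ?_
            have := hξnn k l (r k l u) (hr0 k l u)
            have h7 := (hw k).le; have h8 := (hw l).le; have h9 := hr0 k l u
            positivity
    have hle := intervalIntegral.integral_mono_on hb0
      ((hci 0 b le_rfl hb0).const_mul (w i * w j)) (hcD 0 b le_rfl hb0) hmono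
    rw [intervalIntegral.integral_const_mul] at hle
    have hDb := hDIbound b hb0
    have hwij : (0:ℝ) < w i * w j := mul_pos (hw i) (hw j)
    rw [le_div_iff₀ hwij]
    nlinarith
  -- per-pair interaction terms tend to zero
  have hdij0 : ∀ i j, i ≠ j →
      Filter.Tendsto (fun t => ξ i j (r i j t) * (r i j t)^2) Filter.atTop (nhds 0) := by
    intro i j hij
    have hg0 : ∀ t, 0 ≤ t → 0 ≤ ξ i j (r i j t) * (r i j t)^2 := by
      intro t ht
      have := hξnn i j (r i j t) (hr0 i j t)
      positivity
    have hglip : ∀ s t, 0 ≤ s → 0 ≤ t →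
        |ξ i j (r i j t) * (r i j t)^2 - ξ i j (r i j s) * (r i j s)^2|
          ≤ (C*(K^2+2*K)*(2*F)) * |t-s| := by
      intro s t hs ht
      have ha := hrIcc i j s hs
      have hb := hrIcc i j t ht
      have h1 : |ξ i j (r i j t) * (r i j t)^2 - ξ i j (r i j s) * (r i j s)^2|
          ≤ C*(K^2+2*K) * |r i j t - r i j s| := by
        have e1 : ξ i j (r i j t) * (r i j t)^2 - ξ i j (r i j s) * (r i j s)^2
            = (ξ i j (r i j t) - ξ i j (r i j s)) * (r i j t)^2
              + ξ i j (r i j s) * ((r i j t)^2 - (r i j s)^2) := by ring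
        have h2 := hClip i j hij (r i j s) ha (r i j t) hb
        have h3 := hCb i j hij (r i j s) ha
        have hb2 : (r i j t)^2 ≤ K^2 := by nlinarith [hb.1, hb.2]
        have h4 : |(r i j t)^2 - (r i j s)^2| ≤ 2*K*|r i j t - r i j s| := by
          have e2 : (r i j t)^2 - (r i j s)^2 = (r i j t + r i j s)*(r i j t - r i j s) := by
            ring
          rw [e2, abs_mul]
          have e3 : |r i j t + r i j s| ≤ 2*K := by
            rw [abs_of_nonneg (by linarith [ha.1, hb.1])]
            linarith [ha.2, hb.2]
          nlinarith [abs_nonneg (r i j t - r i j s)]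
        calc |ξ i j (r i j t) * (r i j t)^2 - ξ i j (r i j s) * (r i j s)^2|
            = |(ξ i j (r i j t) - ξ i j (r i j s)) * (r i j t)^2
                + ξ i j (r i j s) * ((r i j t)^2 - (r i j s)^2)| := by rw [e1]
          _ ≤ |(ξ i j (r i j t) - ξ i j (r i j s)) * (r i j t)^2|
                + |ξ i j (r i j s) * ((r i j t)^2 - (r i j s)^2)| := abs_add_le _ _
          _ = |ξ i j (r i j t) - ξ i j (r i j s)| * (r i j t)^2
                + |ξ i j (r i j s)| * |(r i j t)^2 - (r i j s)^2| := by
              rw [abs_mul, abs_mul, abs_of_nonneg (sq_nonneg (r i j t))]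
          _ ≤ (C * |r i j t - r i j s|) * K^2 + C * (2*K*|r i j t - r i j s|) := by
              have n1 := abs_nonneg (ξ i j (r i j t) - ξ i j (r i j s))
              have n2 := abs_nonneg (r i j t - r i j s)
              have n3 := abs_nonneg (ξ i j (r i j s))
              have n4 := abs_nonneg ((r i j t)^2 - (r i j s)^2)
              have n5 := sq_nonneg (r i j t)
              nlinarith
          _ = C*(K^2+2*K) * |r i j t - r i j s| := by ring
      refine le_trans h1 ?_
      have h5 := hrlip i j s t hs ht
      have h6 : (0:ℝ) ≤ C*(K^2+2*K) := by positivity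
      calc C*(K^2+2*K) * |r i j t - r i j s| ≤ C*(K^2+2*K) * ((2*F)*|t-s|) :=
            mul_le_mul_of_nonneg_left h5 h6
        _ = (C*(K^2+2*K)*(2*F)) * |t-s| := by ring
    exact barbalat (B := En 0 / (w i * w j)) (by positivity) hg0 hglip
      (fun T hT => hdint i j hij 0 T le_rfl hT)
  -- dichotomy
  have hdich : ∀ i j, i ≠ j → Filter.Tendsto (r i j) Filter.atTop (nhds 0) ∨
      (∀ ε, 0 < ε → ∀ᶠ t in Filter.atTop, q i j - ε ≤ r i j t) := by
    intro i j hij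
    by_contra hcon
    push_neg at hcon
    obtain ⟨hT0, ε, hε, hfreq⟩ := hcon
    have hfreq : ∃ᶠ t in Filter.atTop, ¬ (q i j - ε ≤ r i j t) := by
      exact hfreq.mono fun t h => not_le.2 h
    -- frequently r < q - ε
    rw [Metric.tendsto_atTop] at hT0
    push_neg at hT0
    obtain ⟨δ, hδ, hfreq2⟩ := hT0
    set δ' : ℝ := min δ (q i j / 4) with hδ'def
    set ε' : ℝ := min ε (q i j / 2) with hε'def
    have hq := hqpos i j hij
    have hδ'pos : 0 < δ' := lt_min hδ (by linarith)
    have hδ'le : δ' ≤ q i j / 4 := min_le_right _ _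
    have hε'le : ε' ≤ q i j / 2 := min_le_right _ _
    have hε'pos : 0 < ε' := lt_min hε (by linarith)
    have horder : δ' < q i j - ε' := by linarith
    -- φ has a positive minimum on [δ', q i j - ε']
    obtain ⟨s0, hs0mem, hs0min⟩ := (isCompact_Icc (a := δ') (b := q i j - ε')).exists_isMinOn
      ⟨δ', Set.mem_Icc.2 ⟨le_rfl, horder.le⟩⟩
      (f := fun s => ξ i j s * s^2)
      (((hξC1 i j hij).continuousOn.mono (fun y hy => le_trans hδ'pos.le hy.1)).mul
        ((continuous_pow 2).continuousOn))
    set m : ℝ := ξ i j s0 * s0^2 with hmdef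
    have hm : 0 < m := by
      have hs01 : 0 < s0 := lt_of_lt_of_le hδ'pos hs0mem.1
      have hs02 : s0 < q i j := by
        have := hs0mem.2; linarith
      have hξpos : 0 < ξ i j s0 := by
        rcases lt_or_eq_of_le (hξnn i j s0 hs01.le) with h | h
        · exact h
        · exfalso
          rcases (hξzero i j hij s0 hs01.le).1 h.symm with h' | h'
          · exact absurd h' hs01.ne'
          · linarith
      positivity
    -- eventually ξ(r) r² < m
    have hev : ∀ᶠ t in Filter.atTop, ξ i j (r i j t) * (r i j t)^2 < m :=
      (hdij0 i j hij).eventually_lt_const hm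
    obtain ⟨T, hT⟩ := Filter.eventually_atTop.1 hev
    set T1 : ℝ := max T 0 with hT1def
    obtain ⟨t1, ht1ge, ht1⟩ := hfreq2 T1
    have ht1pos : 0 ≤ t1 := le_trans (le_max_right T 0) ht1ge
    have hrt1 : δ' ≤ r i j t1 := by
      have h9 : δ ≤ |r i j t1| := by
        rw [Real.dist_eq, sub_zero] at ht1; exact ht1
      rw [abs_of_nonneg (hr0 i j t1)] at h9
      exact le_trans (min_le_left _ _) h9
    have hnotmem : ∀ t, T1 ≤ t → r i j t ∉ Set.Icc δ' (q i j - ε') := by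
      intro t ht hmem
      have h1 := isMinOn_iff.1 hs0min (r i j t) hmem
      have h2 := hT t (le_trans (le_max_left T 0) ht)
      exact absurd h2 (not_lt.2 h1)
    have ht1big : q i j - ε' < r i j t1 := by
      rcases lt_or_ge (q i j - ε') (r i j t1) with h | h
      · exact h
      · exact absurd ⟨hrt1, h⟩ (hnotmem t1 ht1ge)
    obtain ⟨t2, ht2ge, ht2⟩ := (Filter.frequently_atTop.1 hfreq) T1
    have ht2pos : 0 ≤ t2 := le_trans (le_max_right T 0) ht2ge
    have hrt2small : r i j t2 < δ' := by
      have hlt : r i j t2 < q i j - ε := not_le.1 ht2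
      have h8 : ε' ≤ ε := min_le_left _ _
      have hlt2 : r i j t2 ≤ q i j - ε' := by linarith
      rcases lt_or_ge (r i j t2) δ' with h | h
      · exact h
      · exact absurd ⟨h, hlt2⟩ (hnotmem t2 ht2ge)
    have hcont2 : ContinuousOn (r i j) (Set.uIcc t1 t2) := by
      refine (hrc i j).mono ?_
      intro y hy
      rcases le_total t1 t2 with h | h
      · rw [Set.uIcc_of_le h] at hy; exact le_trans ht1pos hy.1
      · rw [Set.uIcc_of_ge h] at hy; exact le_trans ht2pos hy.1
    have hmem : δ' ∈ Set.uIcc (r i j t1) (r i j t2) := by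
      rw [Set.mem_uIcc]
      exact Or.inr ⟨hrt2small.le, by linarith⟩
    obtain ⟨t3, ht3mem, ht3⟩ := intermediate_value_uIcc hcont2 hmem
    have ht3ge : T1 ≤ t3 := by
      rcases le_total t1 t2 with h | h
      · rw [Set.uIcc_of_le h] at ht3mem; exact le_trans ht1ge ht3mem.1
      · rw [Set.uIcc_of_ge h] at ht3mem; exact le_trans ht2ge ht3mem.1
    exact hnotmem t3 ht3ge (by rw [ht3]; exact ⟨le_rfl, horder.le⟩)
  -- clusters
  -- clusters
  have hconv : ∀ i, ∃ li, Filter.Tendsto (fun t => x t i) Filter.atTop (nhds li) := by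
    intro i
    set S : Finset (Fin n) := Finset.univ.filter
      (fun k => k = i ∨ Filter.Tendsto (fun t => ‖x t k - x t i‖) Filter.atTop (nhds 0))
      with hSdef
    have hiS : i ∈ S := Finset.mem_filter.2 ⟨Finset.mem_univ i, Or.inl rfl⟩
    have hS' : ∀ k ∈ S, Filter.Tendsto (fun t => ‖x t k - x t i‖) Filter.atTop (nhds 0) := by
      intro k hk
      rcases (Finset.mem_filter.1 hk).2 with h | h
      · subst h; simp only [sub_self, norm_zero]; exact tendsto_const_nhds
      · exact h
    have hSclosed : ∀ k ∈ S, ∀ j, j ∉ S →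
        ¬ Filter.Tendsto (fun t => ‖x t j - x t k‖) Filter.atTop (nhds 0) := by
      intro k hk j hj hcon
      refine hj (Finset.mem_filter.2 ⟨Finset.mem_univ j, Or.inr ?_⟩)
      refine squeeze_zero (fun t => norm_nonneg _) (fun t => ?_) (by simpa using ((hS' k hk).add hcon))
      calc ‖x t j - x t i‖ = ‖(x t k - x t i) + (x t j - x t k)‖ := by
            rw [sub_add_sub_cancel']
        _ ≤ ‖x t k - x t i‖ + ‖x t j - x t k‖ := norm_add_le _ _
    have hknej : ∀ k ∈ S, ∀ j, j ∉ S → k ≠ j := by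
      intro k hk j hj h
      exact hj (h ▸ hk)
    -- eventual lower bound for cross pairs
    have hcrossEv : ∀ᶠ t in Filter.atTop, ∀ k ∈ S, ∀ j ∈ Sᶜ, q k j / 2 ≤ r k j t := by
      refine (Filter.eventually_all_finset S).2 fun k hk => ?_
      refine (Filter.eventually_all_finset Sᶜ).2 fun j hj => ?_
      have hjS : j ∉ S := Finset.mem_compl.1 hj
      have hkj : k ≠ j := hknej k hk j hjS
      rcases hdich k j hkj with h0 | hq
      · exact absurd h0 (hSclosed k hk j hjS)
      · have h1 := hq (q k j / 2) (by linarith [hqpos k j hkj])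
        exact h1.mono fun t h => by linarith
    obtain ⟨T1', hT1'⟩ := Filter.eventually_atTop.1 hcrossEv
    set T0 : ℝ := max T1' 0 with hT0def
    have hT0nn : (0:ℝ) ≤ T0 := le_max_right _ _
    set cross : Fin n → Finset (Fin n) := fun k =>
      (Finset.univ.filter (fun j => j ≠ k)).filter (fun j => j ∉ S) with hcrossdef
    have hcrossne : ∀ k ∈ S, ∀ j ∈ cross k, k ≠ j := by
      intro k hk j hj
      exact hknej k hk j (Finset.mem_filter.1 hj).2
    set M : ℝ → (EuclideanSpace ℝ (Fin d)) := fun t => ∑ k ∈ S, w k • x t k with hMdef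
    set FM : ℝ → (EuclideanSpace ℝ (Fin d)) := fun t => ∑ k ∈ S, w k • f (x t) k with hFMdef
    set g : ℝ → ℝ := fun t => ∑ k ∈ S, ∑ j ∈ cross k,
      (w k * w j * (2*R) * (4/(q k j)^2)) * (ξ k j (r k j t) * (r k j t)^2) with hgdef
    have hM' : ∀ t, 0 ≤ t → HasDerivAt M (FM t) t := by
      intro t ht
      rw [hMdef, hFMdef]
      exact HasDerivAt.fun_sum (fun k _ => (hxi k t ht).const_smul (w k))
    -- the intra-cluster forces cancel
    have hsplitFM : ∀ t, FM t = ∑ k ∈ S, ∑ j ∈ cross k,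
        (ξ k j (r k j t) * (w k * w j)) • (x t j - x t k) := by
      intro t
      have h1 : ∀ k : Fin n, w k • f (x t) k = ∑ j ∈ Finset.univ.filter (fun j => j ≠ k),
          (ξ k j (r k j t) * (w k * w j)) • (x t j - x t k) := by
        intro k
        rw [hf, Finset.smul_sum]
        refine Finset.sum_congr rfl fun j _ => ?_
        rw [smul_smul, smul_smul]
        congr 1
        ring
      have hintra : ∑ k ∈ S, ∑ j ∈ (Finset.univ.filter (fun j => j ≠ k)).filter
          (fun j => j ∈ S), (ξ k j (r k j t) * (w k * w j)) • (x t j - x t k) = 0 := by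
        have hfe : ∀ k : Fin n, (Finset.univ.filter (fun j => j ≠ k)).filter (fun j => j ∈ S)
            = S.filter (fun j => j ≠ k) := by
          intro k; ext j
          simp only [Finset.mem_filter, Finset.mem_univ, true_and]
          tauto
        rw [Finset.sum_congr rfl fun k _ => by rw [hfe k]]
        refine sum_pairs_symm S _ ?_
        intro k j hkj
        rw [show ξ k j = ξ j k from hξsym k j hkj,
          show r k j t = r j k t from hrsymm k j t, ← smul_neg, neg_sub]
        congr 1
        ring
      calc FM t = ∑ k ∈ S, ∑ j ∈ Finset.univ.filter (fun j => j ≠ k),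
            (ξ k j (r k j t) * (w k * w j)) • (x t j - x t k) :=
            Finset.sum_congr rfl fun k _ => h1 k
        _ = ∑ k ∈ S, (∑ j ∈ (Finset.univ.filter (fun j => j ≠ k)).filter (fun j => j ∈ S),
              (ξ k j (r k j t) * (w k * w j)) • (x t j - x t k)
            + ∑ j ∈ cross k, (ξ k j (r k j t) * (w k * w j)) • (x t j - x t k)) :=
            Finset.sum_congr rfl fun k _ =>
              (Finset.sum_filter_add_sum_filter_not _ _ _).symm
        _ = (∑ k ∈ S, ∑ j ∈ (Finset.univ.filter (fun j => j ≠ k)).filter (fun j => j ∈ S),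
              (ξ k j (r k j t) * (w k * w j)) • (x t j - x t k))
            + ∑ k ∈ S, ∑ j ∈ cross k, (ξ k j (r k j t) * (w k * w j)) • (x t j - x t k) :=
            Finset.sum_add_distrib
        _ = ∑ k ∈ S, ∑ j ∈ cross k, (ξ k j (r k j t) * (w k * w j)) • (x t j - x t k) := by
            rw [hintra, zero_add]
    -- the cross forces are controlled by g
    have hMbound : ∀ t, T0 ≤ t → ‖FM t‖ ≤ g t := by
      intro t ht
      have ht0 : 0 ≤ t := le_trans hT0nn ht
      have hprop := hT1' t (le_trans (le_max_left T1' 0) ht)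
      rw [hsplitFM t, hgdef]
      calc ‖∑ k ∈ S, ∑ j ∈ cross k, (ξ k j (r k j t) * (w k * w j)) • (x t j - x t k)‖
          ≤ ∑ k ∈ S, ‖∑ j ∈ cross k, (ξ k j (r k j t) * (w k * w j)) • (x t j - x t k)‖ :=
            norm_sum_le _ _
        _ ≤ ∑ k ∈ S, ∑ j ∈ cross k, ‖(ξ k j (r k j t) * (w k * w j)) • (x t j - x t k)‖ :=
            Finset.sum_le_sum fun k _ => norm_sum_le _ _
        _ ≤ ∑ k ∈ S, ∑ j ∈ cross k,
            (w k * w j * (2*R) * (4/(q k j)^2)) * (ξ k j (r k j t) * (r k j t)^2) := by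
            refine Finset.sum_le_sum fun k hk => Finset.sum_le_sum fun j hj => ?_
            have hjS : j ∉ S := (Finset.mem_filter.1 hj).2
            have hkj : k ≠ j := hcrossne k hk j hj
            have hq2 : q k j / 2 ≤ r k j t := hprop k hk j (Finset.mem_compl.2 hjS)
            have hrle : r k j t ≤ 2*R := hrbound k j t ht0
            have hξn := hξnn k j (r k j t) (hr0 k j t)
            have hqp := hqpos k j hkj
            have hwk := hw k
            have hwj := hw j
            have hrn := hr0 k j t
            rw [norm_smul, Real.norm_eq_abs,
              abs_of_nonneg (by positivity : (0:ℝ) ≤ ξ k j (r k j t) * (w k * w j))]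
            have hnorm : ‖x t j - x t k‖ = r k j t := rfl
            rw [hnorm]
            have e1 : w k * w j * (2*R) * (4/(q k j)^2) * (ξ k j (r k j t) * (r k j t)^2)
                = (w k * w j * (2*R) * 4 * (ξ k j (r k j t) * (r k j t)^2)) / (q k j)^2 := by
              field_simp
            rw [e1, le_div_iff₀ (by positivity)]
            have hp2 : (q k j)^2 ≤ 4 * (r k j t)^2 := by nlinarith
            nlinarith [mul_nonneg (mul_nonneg hξn (mul_pos hwk hwj).le) hrn,
              mul_nonneg (mul_nonneg (mul_nonneg hξn (mul_pos hwk hwj).le) hrn) hrn,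
              sq_nonneg (r k j t)]
    -- continuity facts
    have hgcont : ContinuousOn g (Set.Ici 0) := by
      rw [hgdef]
      refine continuousOn_finset_sum _ fun k hk => continuousOn_finset_sum _ fun j hj => ?_
      exact continuousOn_const.mul (hdcont k j (hcrossne k hk j hj))
    have hfxc : ∀ k : Fin n, ContinuousOn (fun u => f (x u) k) (Set.Ici 0) := by
      intro k
      have he : (fun u => f (x u) k) = fun u => ∑ j ∈ Finset.univ.filter (fun j => j ≠ k),
          ξ k j (‖x u j - x u k‖) • (w j • (x u j - x u k)) := funext fun u => hf (x u) k
      rw [he]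
      refine continuousOn_finset_sum _ fun j hj => ?_
      have hjk : j ≠ k := by simpa using (Finset.mem_filter.1 hj).2
      exact ((hξC1 k j (Ne.symm hjk)).continuousOn.comp (hrc k j)
        (fun t _ => hr0 k j t)).smul (((hxc j).sub (hxc k)).const_smul (w j))
    have hFMcont : ContinuousOn FM (Set.Ici 0) := by
      rw [hFMdef]
      exact continuousOn_finset_sum _ fun k _ => (hfxc k).const_smul (w k)
    have hgint : ∀ a b : ℝ, T0 ≤ a → a ≤ b → IntervalIntegrable g MeasureTheory.volume a b := by
      intro a b ha hab
      refine (hgcont.mono ?_).intervalIntegrable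
      rw [Set.uIcc_of_le hab]
      exact fun y hy => le_trans hT0nn (le_trans ha hy.1)
    set G : ℝ → ℝ := fun T => ∫ u in T0..T, g u with hGdef
    have hGdiff : ∀ t1 t2, T0 ≤ t1 → t1 ≤ t2 → G t2 - G t1 = ∫ u in t1..t2, g u := by
      intro t1 t2 h1 h2
      have := integral_add_adjacent_intervals (hgint T0 t1 le_rfl h1) (hgint t1 t2 h1 h2)
      rw [hGdef]
      simp only
      linarith
    have hMG : ∀ t1 t2, T0 ≤ t1 → t1 ≤ t2 → ‖M t2 - M t1‖ ≤ G t2 - G t1 := by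
      intro t1 t2 h1 h2
      have ht10 : 0 ≤ t1 := le_trans hT0nn h1
      have hset : Set.uIcc t1 t2 ⊆ Set.Ici (0:ℝ) := by
        rw [Set.uIcc_of_le h2]
        exact fun y hy => le_trans ht10 hy.1
      have hftc : (∫ u in t1..t2, FM u) = M t2 - M t1 :=
        integral_eq_sub_of_hasDerivAt
          (fun u hu => hM' u (hset hu))
          ((hFMcont.mono hset).intervalIntegrable)
      rw [← hftc]
      calc ‖∫ u in t1..t2, FM u‖ ≤ ∫ u in t1..t2, ‖FM u‖ :=
            intervalIntegral.norm_integral_le_integral_norm h2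
        _ ≤ ∫ u in t1..t2, g u := by
            refine intervalIntegral.integral_mono_on h2
              (((hFMcont.mono hset).norm).intervalIntegrable)
              (hgint t1 t2 h1 h2) (fun u hu => hMbound u (le_trans h1 hu.1))
        _ = G t2 - G t1 := (hGdiff t1 t2 h1 h2).symm
    have hGB : ∀ t, T0 ≤ t → G t ≤ ∑ k ∈ S, ∑ j ∈ cross k,
        (w k * w j * (2*R) * (4/(q k j)^2)) * (En 0 / (w k * w j)) := by
      intro t ht
      have hdint' : ∀ k ∈ S, ∀ j ∈ cross k, IntervalIntegrable
          (fun u => (w k * w j * (2*R) * (4/(q k j)^2)) * (ξ k j (r k j u) * (r k j u)^2))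
          MeasureTheory.volume T0 t := by
        intro k hk j hj
        refine ((continuousOn_const.mul (hdcont k j (hcrossne k hk j hj))).mono
          ?_).intervalIntegrable
        rw [Set.uIcc_of_le ht]
        exact fun y hy => le_trans hT0nn hy.1
      have hGt : G t = ∑ k ∈ S, ∑ j ∈ cross k,
          ∫ u in T0..t, (w k * w j * (2*R) * (4/(q k j)^2)) * (ξ k j (r k j u) * (r k j u)^2) := by
        rw [hGdef]
        simp only
        rw [hgdef]
        beta_reduce
        rw [intervalIntegral.integral_finset_sum
          (fun k hk => by
            have h9 := IntervalIntegrable.sum (cross k) (fun j hj => hdint' k hk j hj)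
            have e9 : (∑ j ∈ cross k, fun u => w k * w j * (2 * R) * (4 / q k j ^ 2)
                * (ξ k j (r k j u) * r k j u ^ 2))
                = fun u => ∑ j ∈ cross k, w k * w j * (2 * R) * (4 / q k j ^ 2)
                * (ξ k j (r k j u) * r k j u ^ 2) := by
              funext u
              simp [Finset.sum_apply]
            rwa [e9] at h9)]
        refine Finset.sum_congr rfl fun k hk => ?_
        rw [intervalIntegral.integral_finset_sum (fun j hj => hdint' k hk j hj)]
      rw [hGt]
      refine Finset.sum_le_sum fun k hk => Finset.sum_le_sum fun j hj => ?_
      have hkj : k ≠ j := hcrossne k hk j hj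
      have hqp := hqpos k j hkj
      have hcnn : (0:ℝ) ≤ w k * w j * (2*R) * (4/(q k j)^2) := by
        have := (hw k).le; have := (hw j).le; positivity
      rw [intervalIntegral.integral_const_mul]
      exact mul_le_mul_of_nonneg_left (hdint k j hkj T0 t hT0nn ht) hcnn
    obtain ⟨lM, hlM⟩ := tendsto_of_cauchy_control hMG hGB
    -- recover the limit of x · i
    set Wc : ℝ := ∑ k ∈ S, w k with hWcdef
    have hWcpos : 0 < Wc := Finset.sum_pos (fun k _ => hw k) ⟨i, hiS⟩
    have hdiffeq : ∀ t, x t i - Wc⁻¹ • M t = Wc⁻¹ • ∑ k ∈ S, w k • (x t i - x t k) := by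
      intro t
      have e1 : ∑ k ∈ S, w k • (x t i - x t k) = Wc • x t i - M t := by
        calc ∑ k ∈ S, w k • (x t i - x t k)
            = ∑ k ∈ S, (w k • x t i - w k • x t k) := by
              refine Finset.sum_congr rfl fun k _ => smul_sub _ _ _
          _ = ∑ k ∈ S, w k • x t i - ∑ k ∈ S, w k • x t k := Finset.sum_sub_distrib _ _
          _ = Wc • x t i - M t := by rw [← Finset.sum_smul]
      rw [e1, smul_sub, smul_smul, inv_mul_cancel₀ hWcpos.ne', one_smul]
    have hzero : Filter.Tendsto (fun t => x t i - Wc⁻¹ • M t) Filter.atTop (nhds 0) := by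
      have h3 : ∀ k ∈ S, Filter.Tendsto (fun t => w k • (x t i - x t k)) Filter.atTop
          (nhds 0) := by
        intro k hk
        have h4 : Filter.Tendsto (fun t => x t i - x t k) Filter.atTop (nhds 0) := by
          rw [tendsto_zero_iff_norm_tendsto_zero]
          refine squeeze_zero (fun t => norm_nonneg _)
            (fun t => le_of_eq (norm_sub_rev _ _)) (hS' k hk)
        simpa using h4.const_smul (w k)
      have h2 := tendsto_finset_sum S h3
      simp only [Finset.sum_const_zero] at h2
      have h6 := h2.const_smul Wc⁻¹
      simp only [smul_zero] at h6
      exact Filter.Tendsto.congr (fun t => (hdiffeq t).symm) h6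
    refine ⟨Wc⁻¹ • lM, ?_⟩
    have h7 := hzero.add (hlM.const_smul Wc⁻¹)
    simp only [zero_add] at h7
    refine Filter.Tendsto.congr (fun t => ?_) h7
    exact sub_add_cancel _ _
  choose xstar hxs using hconv
  have hfar : ∀ i j, i ≠ j → xstar i = xstar j ∨ q i j ≤ ‖xstar i - xstar j‖ := by
    intro i j hij
    have hsub : Filter.Tendsto (fun t => x t j - x t i) Filter.atTop
        (nhds (xstar j - xstar i)) := (hxs j).sub (hxs i)
    rcases hdich i j hij with h0 | hq
    · left
      have h1 : Filter.Tendsto (fun t => x t j - x t i) Filter.atTop (nhds 0) :=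
        tendsto_zero_iff_norm_tendsto_zero.2 h0
      have h2 := tendsto_nhds_unique hsub h1
      exact (sub_eq_zero.1 h2).symm
    · right
      have hrt : Filter.Tendsto (r i j) Filter.atTop (nhds ‖xstar j - xstar i‖) := hsub.norm
      have h4 : ∀ ε, 0 < ε → q i j - ε ≤ ‖xstar j - xstar i‖ := fun ε hε =>
        ge_of_tendsto hrt (hq ε hε)
      have h5 : q i j ≤ ‖xstar j - xstar i‖ := by
        by_contra hcon
        push_neg at hcon
        have := h4 ((q i j - ‖xstar j - xstar i‖)/2) (by linarith)
        linarith
      rwa [norm_sub_rev] at h5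
  refine ⟨xstar, ?_, ?_, hfar⟩
  · rw [tendsto_pi_nhds]; exact hxs
  · funext i
    rw [hf]
    refine Finset.sum_eq_zero fun j hj => ?_
    have hj' : j ≠ i := by simpa using (Finset.mem_filter.1 hj).2
    rcases hfar i j (Ne.symm hj') with heq | hge
    · rw [heq]; simp
    · have hz : ξ i j (‖xstar j - xstar i‖) = 0 := by
        rw [hξzero i j (Ne.symm hj') _ (norm_nonneg _)]
        right
        rwa [norm_sub_rev]
      rw [hz, zero_smul]
end

section
/- Let δ ≥ 0, let w_1,…,w_k > 0, set W = ∑_{j=1}^k w_j, and let x_0, x_1, …, x_k : [0,∞) → ℝ^d be differentiable functions satisfying x_0'(t) = ∑_{j=1}^k w_j (x_j(t) − x_0(t)) and x_j'(t) = δ (x_0(t) − x_j(t)) for j = 1,…,k and all t ≥ 0. Define m(t) = (1/W) ∑_{j=1}^k w_j x_j(t). Then for all t ≥ 0, x_0'(t) = W (m(t) − x_0(t)) and m'(t) = δ (x_0(t) − m(t)); moreover x_0(t) and m(t) lie on the closed line segment joining x_0(0) and m(0) for all t ≥ 0. -/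
private lemma const_of_deriv_zero' {E : Type*} [NormedAddCommGroup E] [NormedSpace ℝ E]
    (f : ℝ → E) (hf : ∀ t, 0 ≤ t → HasDerivAt f 0 t) :
    ∀ t, 0 ≤ t → f t = f 0 := by
  intro t ht
  exact constant_of_has_deriv_right_zero
    (fun s hs => (hf s hs.1).continuousAt.continuousWithinAt)
    (fun s hs => (hf s hs.1).hasDerivWithinAt) t ⟨ht, le_rfl⟩

/-- For the linear system describing a zero agent of weight `δ ≥ 0`
interacting with `k` non-interacting clusters, the zero opinion and the cluster center of
mass `m(t) = W⁻¹ ∑ j, wⱼ xⱼ(t)` satisfy `x₀' = W (m − x₀)` and `m' = δ (x₀ − m)`, and both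
stay on the closed segment joining `x₀(0)` and `m(0)` for all `t ≥ 0`. -/
theorem zero_agent_center_of_mass_dynamics {d k : ℕ} (hk : 0 < k)
    (δ : ℝ) (hδ : 0 ≤ δ)
    (w : Fin k → ℝ) (hw : ∀ j, 0 < w j)
    (W : ℝ) (hW : W = ∑ j, w j)
    (x0 : ℝ → EuclideanSpace ℝ (Fin d))
    (x : Fin k → ℝ → EuclideanSpace ℝ (Fin d))
    (hx0 : ∀ t, 0 ≤ t → HasDerivAt x0 (∑ j, w j • (x j t - x0 t)) t)
    (hx : ∀ j, ∀ t, 0 ≤ t → HasDerivAt (x j) (δ • (x0 t - x j t)) t)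
    (m : ℝ → EuclideanSpace ℝ (Fin d))
    (hm : ∀ t, m t = W⁻¹ • ∑ j, w j • x j t) :
    ∀ t, 0 ≤ t →
      HasDerivAt x0 (W • (m t - x0 t)) t ∧
      HasDerivAt m (δ • (x0 t - m t)) t ∧
      x0 t ∈ segment ℝ (x0 0) (m 0) ∧
      m t ∈ segment ℝ (x0 0) (m 0) := by
  haveI : Nonempty (Fin k) := Fin.pos_iff_nonempty.mp hk
  have hWpos : 0 < W := hW ▸ Finset.sum_pos (fun j _ => hw j) Finset.univ_nonempty
  set lam : ℝ := W + δ with hlam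
  have hlampos : 0 < lam := by positivity
  -- x0 derivative
  have hx0' : ∀ t, 0 ≤ t → HasDerivAt x0 (W • (m t - x0 t)) t := by
    intro t ht
    convert hx0 t ht using 1
    rw [hm, smul_sub, smul_inv_smul₀ hWpos.ne']
    simp only [smul_sub, Finset.sum_sub_distrib, ← Finset.sum_smul, ← hW]
  -- m derivative
  have hm' : ∀ t, 0 ≤ t → HasDerivAt m (δ • (x0 t - m t)) t := by
    intro t ht
    have hD : HasDerivAt (fun s => W⁻¹ • ∑ j, w j • x j s)
        (W⁻¹ • ∑ j, w j • δ • (x0 t - x j t)) t :=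
      (HasDerivAt.fun_sum (fun j _ => (hx j t ht).fun_const_smul (w j))).fun_const_smul W⁻¹
    have hfun : m = fun s => W⁻¹ • ∑ j, w j • x j s := funext hm
    have hs : ∑ j, w j • δ • (x0 t - x j t)
        = δ • (W • x0 t - ∑ j, w j • x j t) := by
      rw [hW, Finset.sum_smul, ← Finset.sum_sub_distrib, Finset.smul_sum]
      refine Finset.sum_congr rfl fun j _ => ?_
      module
    rw [hs] at hD
    rw [hfun]
    convert hD using 1
    show δ • (x0 t - W⁻¹ • ∑ j, w j • x j t) = W⁻¹ • δ • (W • x0 t - ∑ j, w j • x j t)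
    match_scalars <;> field_simp
  -- exp(lam t) • (x0 - m) is constant
  have key : ∀ t, 0 ≤ t →
      x0 t - m t = Real.exp (-(lam * t)) • (x0 0 - m 0) := by
    have hv : ∀ t, 0 ≤ t →
        Real.exp (lam * t) • (x0 t - m t) = x0 0 - m 0 := by
      have h := const_of_deriv_zero' (fun s => Real.exp (lam * s) • (x0 s - m s)) ?_
      · intro t ht
        have := h t ht
        simpa using this
      · intro t ht
        have hde : HasDerivAt (fun s => Real.exp (lam * s)) (lam * Real.exp (lam * t)) t := by
          simpa [mul_comm] using ((hasDerivAt_id t).const_mul lam).exp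
        have hdu : HasDerivAt (fun s => x0 s - m s) ((-lam) • (x0 t - m t)) t := by
          have h2 := (hx0' t ht).fun_sub (hm' t ht)
          rw [show ((-lam) • (x0 t - m t)) = W • (m t - x0 t) - δ • (x0 t - m t) by
            rw [hlam]; module]
          exact h2
        have h3 := hde.fun_smul hdu
        convert h3 using 1
        module
    intro t ht
    have := hv t ht
    rw [← this, smul_smul, ← Real.exp_add]
    simp
  -- δ•x0 + W•m is constant
  have hc : ∀ t, 0 ≤ t → δ • x0 t + W • m t = δ • x0 0 + W • m 0 := by
    have h := const_of_deriv_zero' (fun s => δ • x0 s + W • m s) ?_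
    · intro t ht; simpa using h t ht
    · intro t ht
      have h2 := ((hx0' t ht).fun_const_smul δ).fun_add ((hm' t ht).fun_const_smul W)
      convert h2 using 1
      module
  intro t ht
  refine ⟨hx0' t ht, hm' t ht, ?_, ?_⟩
  · -- x0 t on segment
    set e : ℝ := Real.exp (-(lam * t)) with he
    have he0 : 0 < e := Real.exp_pos _
    have he1 : e ≤ 1 := Real.exp_le_one_iff.mpr (by nlinarith)
    have hx0eq : lam • x0 t = (δ + W * e) • x0 0 + (W - W * e) • m 0 := by
      have h1 := key t ht
      have h2 := hc t ht
      have h3 : lam • x0 t = (δ • x0 t + W • m t) + W • (x0 t - m t) := by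
        rw [hlam]; module
      rw [h3, h1, h2, ← he]
      module
    refine ⟨lam⁻¹ * (δ + W * e), lam⁻¹ * (W - W * e), by positivity,
      by have : 0 ≤ W - W * e := by nlinarith
         positivity, ?_, ?_⟩
    · field_simp; ring
    · have := congrArg (fun v => lam⁻¹ • v) hx0eq
      simp only [smul_smul, inv_mul_cancel₀ hlampos.ne', one_smul, smul_add] at this
      exact this.symm
  · -- m t on segment
    set e : ℝ := Real.exp (-(lam * t)) with he
    have he0 : 0 < e := Real.exp_pos _
    have he1 : e ≤ 1 := Real.exp_le_one_iff.mpr (by nlinarith)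
    have hmeq : lam • m t = (δ - δ * e) • x0 0 + (W + δ * e) • m 0 := by
      have h1 := key t ht
      have h2 := hc t ht
      have h3 : lam • m t = (δ • x0 t + W • m t) - δ • (x0 t - m t) := by
        rw [hlam]; module
      rw [h3, h1, h2, ← he]
      module
    refine ⟨lam⁻¹ * (δ - δ * e), lam⁻¹ * (W + δ * e),
      by have : 0 ≤ δ - δ * e := by nlinarith
         positivity, by positivity, ?_, ?_⟩
    · field_simp; ring
    · have := congrArg (fun v => lam⁻¹ • v) hmeq
      simp only [smul_smul, inv_mul_cancel₀ hlampos.ne', one_smul, smul_add] at this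
      exact this.symm
end

section
/- Let δ ≥ 0, let w_1,…,w_k > 0, set W = ∑_{j=1}^k w_j, and let x_0, x_1, …, x_k : [0,∞) → ℝ^d be differentiable functions satisfying x_0'(t) = ∑_{j=1}^k w_j (x_j(t) − x_0(t)) and x_j'(t) = δ (x_0(t) − x_j(t)) for j = 1,…,k and all t ≥ 0. Define m(t) = (1/W) ∑_{j=1}^k w_j x_j(t) and m_* = (δ x_0(0) + ∑_{j=1}^k w_j x_j(0)) / (W + δ). Then for all t ≥ 0: |x_0(t) − m_*|² ≤ e^{−2(W+δ)t} |x_0(0) − m_*|² and |m(t) − m_*|² ≤ e^{−2(W+δ)t} |m(0) − m_*|². -/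
lemma expDecay_aux {E : Type*} [NormedAddCommGroup E] [NormedSpace ℝ E]
    (l : ℝ) (f : ℝ → E) (c : E)
    (hf : ∀ t, 0 ≤ t → HasDerivAt f (-l • (f t - c)) t) :
    ∀ t, 0 ≤ t → f t - c = Real.exp (-l * t) • (f 0 - c) := by
  intro T hT
  set g : ℝ → E := fun t => Real.exp (l * t) • (f t - c) with hg
  have hderiv : ∀ t, 0 ≤ t → HasDerivAt g 0 t := by
    intro t ht
    have h1 : HasDerivAt (fun s => Real.exp (l * s)) (Real.exp (l * t) * l) t := by
      simpa using ((hasDerivAt_id t).const_mul l).exp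
    have h2 : HasDerivAt (fun s => f s - c) (-l • (f t - c)) t := (hf t ht).sub_const c
    have h3 := h1.smul h2
    refine h3.congr_deriv ?_
    module
  have hconst : g T = g 0 := by
    have hcont : ContinuousOn g (Set.Icc 0 T) := fun s hs =>
      ((hderiv s hs.1).continuousAt).continuousWithinAt
    exact constant_of_has_deriv_right_zero hcont
      (fun s hs => (hderiv s hs.1).hasDerivWithinAt) T (Set.right_mem_Icc.2 hT)
  have hg0 : g 0 = f 0 - c := by simp [hg]
  have hgT : Real.exp (l * T) • (f T - c) = f 0 - c := by rw [← hg0]; exact hconst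
  have h5 := congrArg (fun v => Real.exp (-(l * T)) • v) hgT
  simp only [smul_smul, ← Real.exp_add, neg_add_cancel, Real.exp_zero, one_smul] at h5
  simpa [neg_mul] using h5

/-- For the linear system describing a zero agent of weight `δ ≥ 0` and
`k` non-interacting clusters, with `m_* = (δ x₀(0) + ∑ j, wⱼ xⱼ(0)) / (W + δ)` the total
weighted center of mass, both `x₀(t)` and the cluster center of mass `m(t)` converge
exponentially to `m_*`:
`|x₀(t) − m_*|² ≤ e^{−2(W+δ)t} |x₀(0) − m_*|²` and
`|m(t) − m_*|² ≤ e^{−2(W+δ)t} |m(0) − m_*|²` for all `t ≥ 0`. -/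
theorem zero_agent_exponential_estimates {d k : ℕ} (hk : 0 < k)
    (δ : ℝ) (hδ : 0 ≤ δ)
    (w : Fin k → ℝ) (hw : ∀ j, 0 < w j)
    (W : ℝ) (hW : W = ∑ j, w j)
    (x0 : ℝ → EuclideanSpace ℝ (Fin d))
    (x : Fin k → ℝ → EuclideanSpace ℝ (Fin d))
    (hx0 : ∀ t, 0 ≤ t → HasDerivAt x0 (∑ j, w j • (x j t - x0 t)) t)
    (hx : ∀ j, ∀ t, 0 ≤ t → HasDerivAt (x j) (δ • (x0 t - x j t)) t)
    (m : ℝ → EuclideanSpace ℝ (Fin d))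
    (hm : ∀ t, m t = W⁻¹ • ∑ j, w j • x j t)
    (mstar : EuclideanSpace ℝ (Fin d))
    (hmstar : mstar = (W + δ)⁻¹ • (δ • x0 0 + ∑ j, w j • x j 0)) :
    ∀ t, 0 ≤ t →
      ‖x0 t - mstar‖ ^ 2 ≤ Real.exp (-2 * (W + δ) * t) * ‖x0 0 - mstar‖ ^ 2 ∧
      ‖m t - mstar‖ ^ 2 ≤ Real.exp (-2 * (W + δ) * t) * ‖m 0 - mstar‖ ^ 2 := by
  have : Nonempty (Fin k) := ⟨⟨0, hk⟩⟩
  have hW0 : 0 < W := hW ▸ Finset.sum_pos (fun j _ => hw j) Finset.univ_nonempty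
  have hlam0 : 0 < W + δ := by linarith
  have hlamne : W + δ ≠ 0 := ne_of_gt hlam0
  -- conservation of S t = δ • x0 t + ∑ w j • x j t
  set S : ℝ → EuclideanSpace ℝ (Fin d) := fun t => δ • x0 t + ∑ j, w j • x j t with hSdef
  have hSd : ∀ t, 0 ≤ t → HasDerivAt S (-(0:ℝ) • (S t - 0)) t := by
    intro t ht
    have h2 : HasDerivAt (fun s => ∑ j, w j • x j s)
        (∑ j, w j • δ • (x0 t - x j t)) t :=
      HasDerivAt.fun_sum (fun j (_ : j ∈ Finset.univ) => (hx j t ht).const_smul (w j))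
    have h1 := ((hx0 t ht).const_smul δ).add h2
    refine h1.congr_deriv (Eq.symm ?_)
    simp only [neg_zero, zero_smul]
    rw [Finset.smul_sum, ← Finset.sum_add_distrib, eq_comm]
    apply Finset.sum_eq_zero
    intro j _
    rw [smul_smul, smul_smul, mul_comm, smul_sub, smul_sub]
    abel
  have hS : ∀ t, 0 ≤ t → δ • x0 t + ∑ j, w j • x j t = (W + δ) • mstar := by
    intro t ht
    have h := expDecay_aux 0 S 0 hSd t ht
    simp only [neg_zero, zero_mul, Real.exp_zero, sub_zero, one_smul] at h
    have h0 : S 0 = (W + δ) • mstar := by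
      rw [hSdef, hmstar, smul_inv_smul₀ hlamne]
    calc δ • x0 t + ∑ j, w j • x j t = S t := rfl
      _ = S 0 := h
      _ = (W + δ) • mstar := h0
  -- x0 satisfies the decay ODE toward mstar
  have hx0d : ∀ t, 0 ≤ t → HasDerivAt x0 (-(W + δ) • (x0 t - mstar)) t := by
    intro t ht
    have hsum : ∑ j, w j • x j t = (W + δ) • mstar - δ • x0 t :=
      eq_sub_of_add_eq' (hS t ht)
    convert hx0 t ht using 1
    have : ∑ j, w j • (x j t - x0 t) = (∑ j, w j • x j t) - (∑ j, w j) • x0 t := by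
      rw [Finset.sum_smul, ← Finset.sum_sub_distrib]
      exact Finset.sum_congr rfl fun j _ => smul_sub (w j) _ _
    rw [this, hsum, ← hW]
    module
  have hlamt : ∀ t, 0 ≤ t → x0 t - mstar = Real.exp (-(W + δ) * t) • (x0 0 - mstar) :=
    expDecay_aux (W + δ) x0 mstar hx0d
  -- m t - mstar is proportional to mstar - x0 t
  have hmrel : ∀ t, 0 ≤ t → m t - mstar = (δ * W⁻¹) • (mstar - x0 t) := by
    intro t ht
    have hsum : ∑ j, w j • x j t = (W + δ) • mstar - δ • x0 t :=
      eq_sub_of_add_eq' (hS t ht)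
    rw [hm, hsum]
    have hWne : W ≠ 0 := ne_of_gt hW0
    match_scalars <;> field_simp <;> ring
  intro t ht
  have hnorm : ∀ v u : EuclideanSpace ℝ (Fin d),
      v = Real.exp (-(W + δ) * t) • u →
      ‖v‖ ^ 2 ≤ Real.exp (-2 * (W + δ) * t) * ‖u‖ ^ 2 := by
    intro v u hvu
    rw [hvu, norm_smul, Real.norm_eq_abs, abs_of_pos (Real.exp_pos _), mul_pow,
      ← Real.exp_nat_mul]
    apply le_of_eq
    ring_nf
  constructor
  · exact hnorm _ _ (hlamt t ht)
  · apply hnorm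
    rw [hmrel t ht, hmrel 0 le_rfl]
    have : mstar - x0 t = Real.exp (-(W + δ) * t) • (mstar - x0 0) := by
      have h := hlamt t ht
      have : -(x0 t - mstar) = -(Real.exp (-(W + δ) * t) • (x0 0 - mstar)) := by rw [h]
      simpa [neg_sub, smul_sub] using this
    rw [this, smul_comm]
end

section
/- Let w_1,…,w_k > 0 and let K ⊂ (ℝ^d)^{k+1} be compact. For δ ≥ 0 and initial state x* = (x*_0, x*_1, …, x*_k) ∈ K, let X^δ(t, x*) denote the solution, for t ≥ 0, of the linear system X_0' = ∑_{j=1}^k w_j (X_j − X_0), X_j' = δ (X_0 − X_j) (j = 1,…,k) with X(0) = x*. Then the zeroth component converges uniformly over the infinite time interval: lim_{δ → 0+} sup_{t ∈ [0,∞), x* ∈ K} |X^δ_0(t, x*) − X^0_0(t, x*)| = 0. -/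
open Real Set

lemma eq_const_of_deriv_zero' {E : Type*} [NormedAddCommGroup E] [NormedSpace ℝ E]
    (f : ℝ → E) (h : ∀ t, 0 ≤ t → HasDerivAt f 0 t) : ∀ t, 0 ≤ t → f t = f 0 := by
  intro t ht
  exact constant_of_has_deriv_right_zero
    (fun s hs => (h s hs.1).continuousAt.continuousWithinAt)
    (fun s hs => (h s hs.1).hasDerivWithinAt) t (mem_Icc.2 ⟨ht, le_refl t⟩)

lemma ode_formula' {E : Type*} [NormedAddCommGroup E] [NormedSpace ℝ E]
    (W δ : ℝ) (hW : 0 < W) (hδ : 0 ≤ δ) (p q : ℝ → E)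
    (hp : ∀ t, 0 ≤ t → HasDerivAt p (q t - W • p t) t)
    (hq : ∀ t, 0 ≤ t → HasDerivAt q (δ • (W • p t - q t)) t) :
    ∀ t, 0 ≤ t → p t = (W + δ)⁻¹ •
      ((δ • p 0 + q 0) + Real.exp (-((W + δ) * t)) • (W • p 0 - q 0)) := by
  have hlam : (0:ℝ) < W + δ := by linarith
  have hu : ∀ t, 0 ≤ t → δ • p t + q t = δ • p 0 + q 0 := by
    apply eq_const_of_deriv_zero'
    intro t ht
    have := ((hp t ht).const_smul δ).add (hq t ht)
    convert this using 1
    · rfl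
    module
  have hg : ∀ t, 0 ≤ t → Real.exp ((W + δ) * t) • (W • p t - q t) = W • p 0 - q 0 := by
    have := eq_const_of_deriv_zero' (fun t => Real.exp ((W + δ) * t) • (W • p t - q t)) ?_
    · intro t ht
      have h0 := this t ht
      simpa using h0
    · intro t ht
      have hc : HasDerivAt (fun t => Real.exp ((W + δ) * t)) ((W + δ) * Real.exp ((W + δ) * t)) t := by
        have := ((hasDerivAt_id t).const_mul (W + δ)).exp
        simpa [mul_comm] using this
      have hr : HasDerivAt (fun t => W • p t - q t) (W • (q t - W • p t) - δ • (W • p t - q t)) t :=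
        ((hp t ht).const_smul W).sub (hq t ht)
      have := hc.smul hr
      convert this using 1
      · rfl
      module
  intro t ht
  have h1 := hu t ht
  have h2 := hg t ht
  have h3 : W • p t - q t = Real.exp (-((W + δ) * t)) • (W • p 0 - q 0) := by
    rw [← h2, Real.exp_neg, smul_smul, inv_mul_cancel₀ (Real.exp_ne_zero _), one_smul]
  have h4 : (W + δ) • p t = (δ • p 0 + q 0) + Real.exp (-((W + δ) * t)) • (W • p 0 - q 0) := by
    rw [← h1, ← h3]; module
  rw [← h4, smul_smul, inv_mul_cancel₀ (ne_of_gt hlam), one_smul]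

lemma exp_diff_le' (W δ t : ℝ) (hW : 0 < W) (hδ : 0 ≤ δ) (ht : 0 ≤ t) :
    Real.exp (-(W * t)) - Real.exp (-((W + δ) * t)) ≤ δ / W := by
  have h1 : Real.exp (-((W + δ) * t)) = Real.exp (-(W * t)) * Real.exp (-(δ * t)) := by
    rw [← Real.exp_add]; ring_nf
  have key1 : 1 - Real.exp (-(δ * t)) ≤ δ * t := by
    have := Real.add_one_le_exp (-(δ * t)); linarith
  have key2 : t * Real.exp (-(W * t)) ≤ 1 / W := by
    have hWt : W * t ≤ Real.exp (W * t) := by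
      have := Real.add_one_le_exp (W * t); linarith
    have e1 : Real.exp (-(W * t)) * Real.exp (W * t) = 1 := by
      rw [← Real.exp_add]; simp
    rw [le_div_iff₀ hW]
    nlinarith [Real.exp_pos (-(W * t)),
      mul_le_mul_of_nonneg_right hWt (le_of_lt (Real.exp_pos (-(W * t))))]
  have hEpos : 0 < Real.exp (-(W * t)) := Real.exp_pos _
  calc Real.exp (-(W * t)) - Real.exp (-((W + δ) * t))
      = Real.exp (-(W * t)) * (1 - Real.exp (-(δ * t))) := by rw [h1]; ring
    _ ≤ Real.exp (-(W * t)) * (δ * t) := by nlinarith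
    _ = δ * (t * Real.exp (-(W * t))) := by ring
    _ ≤ δ * (1 / W) := by nlinarith
    _ = δ / W := by ring

/-- Let `X^δ(t, x*)` denote the solution of the linear system
`X₀' = ∑ j, wⱼ (Xⱼ − X₀)`, `Xⱼ' = δ (X₀ − Xⱼ)` with initial state `x* ∈ K` (`K` compact).
Then the zero-agent component converges uniformly over the *infinite* time interval
`[0,∞)` and `x* ∈ K` to the `δ = 0` solution as `δ → 0+`. -/
theorem uniform_perturbation_infinite_time_zero_agent {d k : ℕ} (hk : 0 < k)
    (w : Fin k → ℝ) (hw : ∀ j, 0 < w j)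
    (K : Set (EuclideanSpace ℝ (Fin d) × (Fin k → EuclideanSpace ℝ (Fin d))))
    (hK : IsCompact K)
    (X : ℝ → (EuclideanSpace ℝ (Fin d) × (Fin k → EuclideanSpace ℝ (Fin d))) → ℝ →
      EuclideanSpace ℝ (Fin d) × (Fin k → EuclideanSpace ℝ (Fin d)))
    (hinit : ∀ δ, 0 ≤ δ → ∀ p, X δ p 0 = p)
    (hderiv : ∀ δ, 0 ≤ δ → ∀ p, ∀ t, 0 ≤ t →
      HasDerivAt (X δ p)
        ((∑ j, w j • ((X δ p t).2 j - (X δ p t).1)),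
          fun j => δ • ((X δ p t).1 - (X δ p t).2 j)) t) :
    ∀ ε > (0 : ℝ), ∃ δ₀ > (0 : ℝ), ∀ δ, 0 < δ → δ < δ₀ →
      ∀ t, 0 ≤ t → ∀ p ∈ K, ‖(X δ p t).1 - (X 0 p t).1‖ < ε := by
  intro ε hε
  set W : ℝ := ∑ j, w j with hWdef
  have hW : 0 < W := Finset.sum_pos (fun j _ => hw j) (Finset.univ_nonempty_iff.2 ⟨⟨0, hk⟩⟩)
  -- closed-form solution for the zero agent
  have main : ∀ δ : ℝ, 0 ≤ δ → ∀ p, ∀ t, 0 ≤ t → (X δ p t).1 =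
      (W + δ)⁻¹ • ((δ • p.1 + (∑ j, w j • p.2 j)) +
        Real.exp (-((W + δ) * t)) • (W • p.1 - ∑ j, w j • p.2 j)) := by
    intro δ hδ p
    have hp : ∀ t, 0 ≤ t → HasDerivAt (fun t => (X δ p t).1)
        ((∑ j, w j • (X δ p t).2 j) - W • (X δ p t).1) t := by
      intro t ht
      have H := hderiv δ hδ p t ht
      have h1' := (ContinuousLinearMap.fst ℝ (EuclideanSpace ℝ (Fin d))
        (Fin k → EuclideanSpace ℝ (Fin d))).hasFDerivAt.comp_hasDerivAt t H
      have h1 : HasDerivAt (fun s => (X δ p s).1)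
          (∑ j, w j • ((X δ p t).2 j - (X δ p t).1)) t := by
        exact h1'
      have hval : (∑ j, w j • ((X δ p t).2 j - (X δ p t).1)) =
          (∑ j, w j • (X δ p t).2 j) - W • (X δ p t).1 := by
        simp [smul_sub, Finset.sum_sub_distrib, Finset.sum_smul, hWdef]
      exact hval ▸ h1
    have hq : ∀ t, 0 ≤ t → HasDerivAt (fun t => ∑ j, w j • (X δ p t).2 j)
        (δ • (W • (X δ p t).1 - ∑ j, w j • (X δ p t).2 j)) t := by
      intro t ht
      have H := hderiv δ hδ p t ht
      have hj : ∀ j : Fin k, HasDerivAt (fun s => (X δ p s).2 j)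
          (δ • ((X δ p t).1 - (X δ p t).2 j)) t := by
        intro j
        have := ((ContinuousLinearMap.proj j).comp (ContinuousLinearMap.snd ℝ
          (EuclideanSpace ℝ (Fin d)) (Fin k → EuclideanSpace ℝ (Fin d)))).hasFDerivAt.comp_hasDerivAt t H
        exact this
      have hsum : HasDerivAt (fun t => ∑ j, w j • (X δ p t).2 j)
          (∑ j, w j • δ • ((X δ p t).1 - (X δ p t).2 j)) t :=
        HasDerivAt.fun_sum (fun j _ => (hj j).const_smul (w j))
      have hval : (∑ j, w j • δ • ((X δ p t).1 - (X δ p t).2 j)) =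
          δ • (W • (X δ p t).1 - ∑ j, w j • (X δ p t).2 j) := by
        have h1 : ∀ j : Fin k, w j • δ • ((X δ p t).1 - (X δ p t).2 j)
            = δ • (w j • (X δ p t).1) - δ • (w j • (X δ p t).2 j) := fun j => by
          module
        rw [Finset.sum_congr rfl fun j _ => h1 j, Finset.sum_sub_distrib,
          ← Finset.smul_sum, ← Finset.smul_sum, ← smul_sub, ← Finset.sum_smul, ← hWdef]
      exact hval ▸ hsum
    intro t ht
    have := ode_formula' W δ hW hδ (fun t => (X δ p t).1) (fun t => ∑ j, w j • (X δ p t).2 j)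
      hp hq t ht
    simpa only [hinit δ hδ p] using this
  -- uniform bound on K
  obtain ⟨C0, hC0⟩ := isBounded_iff_forall_norm_le.mp hK.isBounded
  set M : ℝ := max C0 0 with hMdef
  have hM0 : 0 ≤ M := le_max_right _ _
  have hA : ∀ p ∈ K, ‖p.1‖ ≤ M := fun p hp =>
    le_trans (norm_fst_le p) (le_trans (hC0 p hp) (le_max_left _ _))
  have hB : ∀ p ∈ K, ‖∑ j, w j • p.2 j‖ ≤ W * M := by
    intro p hp
    calc ‖∑ j, w j • p.2 j‖ ≤ ∑ j, ‖w j • p.2 j‖ := norm_sum_le _ _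
      _ ≤ ∑ j, w j * M := by
          apply Finset.sum_le_sum
          intro j _
          rw [norm_smul, Real.norm_eq_abs, abs_of_pos (hw j)]
          have h2 : ‖p.2 j‖ ≤ M := le_trans (norm_le_pi_norm p.2 j)
            (le_trans (norm_snd_le p) (le_trans (hC0 p hp) (le_max_left _ _)))
          exact mul_le_mul_of_nonneg_left h2 (le_of_lt (hw j))
      _ = W * M := by rw [← Finset.sum_mul]
  -- choose δ₀
  set C : ℝ := 6 * M / W with hCdef
  have hC : 0 ≤ C := by positivity
  have hC1 : (0:ℝ) < C + 1 := by linarith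
  refine ⟨ε / (C + 1), div_pos hε hC1, ?_⟩
  intro δ hδ hδlt t ht p hp
  have hXδ := main δ (le_of_lt hδ) p t ht
  have hX0 := main 0 le_rfl p t ht
  simp only [zero_smul, zero_add, add_zero] at hX0
  have hlam : (0:ℝ) < W + δ := by linarith
  set A := p.1 with hAdef
  set B := ∑ j, w j • p.2 j with hBdef
  set EL := Real.exp (-((W + δ) * t)) with hELdef
  set EW := Real.exp (-(W * t)) with hEWdef
  have hELpos : 0 < EL := Real.exp_pos _
  have hEWpos : 0 < EW := Real.exp_pos _
  have hEW1 : EW ≤ 1 := by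
    rw [hEWdef, ← Real.exp_zero]
    exact Real.exp_le_exp.2 (neg_nonpos.2 (mul_nonneg (le_of_lt hW) ht))
  have hEle : EL ≤ EW := Real.exp_le_exp.2 (by nlinarith [mul_nonneg (le_of_lt hδ) ht])
  have hEdiff : EW - EL ≤ δ / W := exp_diff_le' W δ t hW (le_of_lt hδ) ht
  have hWi : (0:ℝ) < W⁻¹ := inv_pos.2 hW
  have hinvpos : (0:ℝ) < (W + δ)⁻¹ := inv_pos.2 hlam
  have hinv : (W + δ)⁻¹ ≤ W⁻¹ := inv_anti₀ hW (by linarith)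
  -- decompose the difference
  have hD : (X δ p t).1 - (X 0 p t).1 =
      (δ * (W + δ)⁻¹) • A + ((W + δ)⁻¹ - W⁻¹) • B +
        ((W + δ)⁻¹ * EL - W⁻¹ * EW) • (W • A - B) := by
    rw [hXδ, hX0]
    module
  -- scalar bounds
  have hs1 : |δ * (W + δ)⁻¹| ≤ δ / W := by
    rw [abs_of_nonneg (mul_nonneg (le_of_lt hδ) (le_of_lt hinvpos)), div_eq_mul_inv]
    exact mul_le_mul_of_nonneg_left hinv (le_of_lt hδ)
  have hs2 : |(W + δ)⁻¹ - W⁻¹| ≤ δ / W ^ 2 := by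
    have he : (W + δ)⁻¹ - W⁻¹ = -(δ * (W⁻¹ * (W + δ)⁻¹)) := by
      field_simp
      ring
    rw [he, abs_neg, abs_of_nonneg (mul_nonneg (le_of_lt hδ)
      (mul_nonneg (le_of_lt hWi) (le_of_lt hinvpos)))]
    calc δ * (W⁻¹ * (W + δ)⁻¹) ≤ δ * (W⁻¹ * W⁻¹) :=
          mul_le_mul_of_nonneg_left (mul_le_mul_of_nonneg_left hinv (le_of_lt hWi)) (le_of_lt hδ)
      _ = δ / W ^ 2 := by rw [pow_two, div_eq_mul_inv, mul_inv]
  have hs3 : |(W + δ)⁻¹ * EL - W⁻¹ * EW| ≤ 2 * δ / W ^ 2 := by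
    have hsplit : (W + δ)⁻¹ * EL - W⁻¹ * EW =
        (W + δ)⁻¹ * (EL - EW) + ((W + δ)⁻¹ - W⁻¹) * EW := by ring
    rw [hsplit]
    have h1 : |(W + δ)⁻¹ * (EL - EW)| ≤ δ / W ^ 2 := by
      rw [abs_mul, abs_of_pos hinvpos, abs_of_nonpos (by linarith)]
      calc (W + δ)⁻¹ * -(EL - EW) = (W + δ)⁻¹ * (EW - EL) := by ring
        _ ≤ W⁻¹ * (δ / W) := mul_le_mul hinv hEdiff (by linarith) (le_of_lt hWi)
        _ = δ / W ^ 2 := by rw [pow_two, div_eq_mul_inv, div_eq_mul_inv, mul_inv]; ring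
    have h2 : |((W + δ)⁻¹ - W⁻¹) * EW| ≤ δ / W ^ 2 := by
      rw [abs_mul, abs_of_pos hEWpos]
      calc |(W + δ)⁻¹ - W⁻¹| * EW ≤ (δ / W ^ 2) * 1 :=
            mul_le_mul hs2 hEW1 (le_of_lt hEWpos) (le_trans (abs_nonneg _) hs2)
        _ = δ / W ^ 2 := by ring
    calc |(W + δ)⁻¹ * (EL - EW) + ((W + δ)⁻¹ - W⁻¹) * EW| ≤
        |(W + δ)⁻¹ * (EL - EW)| + |((W + δ)⁻¹ - W⁻¹) * EW| := abs_add_le _ _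
      _ ≤ δ / W ^ 2 + δ / W ^ 2 := add_le_add h1 h2
      _ = 2 * δ / W ^ 2 := by ring
  -- vector norm bounds
  have hAn : ‖A‖ ≤ M := hA p hp
  have hBn : ‖B‖ ≤ W * M := hB p hp
  have hRn : ‖W • A - B‖ ≤ 2 * W * M := by
    calc ‖W • A - B‖ ≤ ‖W • A‖ + ‖B‖ := norm_sub_le _ _
      _ = W * ‖A‖ + ‖B‖ := by rw [norm_smul, Real.norm_eq_abs, abs_of_pos hW]
      _ ≤ W * M + W * M := add_le_add (mul_le_mul_of_nonneg_left hAn (le_of_lt hW)) hBn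
      _ = 2 * W * M := by ring
  have hd1 : (0:ℝ) ≤ δ / W := div_nonneg (le_of_lt hδ) (le_of_lt hW)
  have hd2 : (0:ℝ) ≤ δ / W ^ 2 := div_nonneg (le_of_lt hδ) (by positivity)
  have hd3 : (0:ℝ) ≤ 2 * δ / W ^ 2 := div_nonneg (by linarith) (by positivity)
  -- assemble
  calc ‖(X δ p t).1 - (X 0 p t).1‖
      = ‖(δ * (W + δ)⁻¹) • A + ((W + δ)⁻¹ - W⁻¹) • B +
          ((W + δ)⁻¹ * EL - W⁻¹ * EW) • (W • A - B)‖ := by rw [hD]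
    _ ≤ ‖(δ * (W + δ)⁻¹) • A + ((W + δ)⁻¹ - W⁻¹) • B‖ +
          ‖((W + δ)⁻¹ * EL - W⁻¹ * EW) • (W • A - B)‖ := norm_add_le _ _
    _ ≤ (‖(δ * (W + δ)⁻¹) • A‖ + ‖((W + δ)⁻¹ - W⁻¹) • B‖) +
          ‖((W + δ)⁻¹ * EL - W⁻¹ * EW) • (W • A - B)‖ :=
            add_le_add_left (norm_add_le _ _) _
    _ = (|δ * (W + δ)⁻¹| * ‖A‖ + |(W + δ)⁻¹ - W⁻¹| * ‖B‖) +
          |(W + δ)⁻¹ * EL - W⁻¹ * EW| * ‖W • A - B‖ := by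
            rw [norm_smul, norm_smul, norm_smul, Real.norm_eq_abs, Real.norm_eq_abs,
              Real.norm_eq_abs]
    _ ≤ ((δ / W) * M + (δ / W ^ 2) * (W * M)) + (2 * δ / W ^ 2) * (2 * W * M) :=
          add_le_add (add_le_add
            (mul_le_mul hs1 hAn (norm_nonneg _) hd1)
            (mul_le_mul hs2 hBn (norm_nonneg _) hd2))
            (mul_le_mul hs3 hRn (norm_nonneg _) hd3)
    _ = δ * C := by rw [hCdef]; field_simp; ring
    _ ≤ δ * (C + 1) := mul_le_mul_of_nonneg_left (by linarith) (le_of_lt hδ)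
    _ < (ε / (C + 1)) * (C + 1) := by
          apply mul_lt_mul_of_pos_right hδlt hC1
    _ = ε := div_mul_cancel₀ ε (ne_of_gt hC1)
end

section
/- Let δ > 0, let w_1,…,w_k > 0, set W = ∑_{j=1}^k w_j, and let x_0, x_1, …, x_k : [0,∞) → ℝ^d be differentiable functions satisfying x_0'(t) = ∑_{j=1}^k w_j (x_j(t) − x_0(t)) and x_j'(t) = δ (x_0(t) − x_j(t)) for j = 1,…,k and all t ≥ 0. Then every component converges to the total weighted center of mass: for each j ∈ {0,1,…,k}, x_j(t) → m_* := (δ x_0(0) + ∑_{i=1}^k w_i x_i(0)) / (W + δ) as t → ∞. -/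
private lemma aux_exp_decay {E : Type*} [NormedAddCommGroup E] [NormedSpace ℝ E]
    (c : ℝ) (f : ℝ → E) (hf : ∀ t, 0 ≤ t → HasDerivAt f ((-c) • f t) t) :
    ∀ t, 0 ≤ t → f t = Real.exp (-(c * t)) • f 0 := by
  have hg : ∀ t, 0 ≤ t → HasDerivAt (fun s => Real.exp (c * s) • f s) 0 t := by
    intro t ht
    have h1 : HasDerivAt (fun s : ℝ => c * s) c t := by
      simpa using (hasDerivAt_id t).const_mul c
    have he : HasDerivAt (fun s : ℝ => Real.exp (c * s)) (Real.exp (c * t) * c) t :=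
      (Real.hasDerivAt_exp (c * t)).comp t h1
    have h2 := he.smul (hf t ht)
    convert h2 using 1
    · rfl
    rw [smul_smul]
    have h3 : Real.exp (c * t) * -c + Real.exp (c * t) * c = 0 := by ring
    rw [← add_smul, h3, zero_smul]
  intro t ht
  have hcont : ContinuousOn (fun s => Real.exp (c * s) • f s) (Set.Icc 0 t) :=
    fun s hs => ((hg s hs.1).continuousAt).continuousWithinAt
  have hconst := constant_of_has_deriv_right_zero hcont
    (fun s hs => (hg s hs.1).hasDerivWithinAt) t ⟨ht, le_rfl⟩
  have h1 : Real.exp (c * t) • f t = f 0 := by simpa using hconst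
  have h2 : f t = (Real.exp (c * t))⁻¹ • (Real.exp (c * t) • f t) := by
    rw [smul_smul, inv_mul_cancel₀ (Real.exp_ne_zero _), one_smul]
  rw [h2, h1, Real.exp_neg]

private lemma aux_exp_decay_tendsto {E : Type*} [NormedAddCommGroup E] [NormedSpace ℝ E]
    (c : ℝ) (hc : 0 < c) (f : ℝ → E) (hf : ∀ t, 0 ≤ t → HasDerivAt f ((-c) • f t) t) :
    Filter.Tendsto f Filter.atTop (nhds 0) := by
  have hrep := aux_exp_decay c f hf
  have hexp : Filter.Tendsto (fun t : ℝ => Real.exp (-(c * t))) Filter.atTop (nhds 0) := by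
    apply Real.tendsto_exp_atBot.comp
    exact Filter.tendsto_neg_atTop_atBot.comp (Filter.tendsto_id.const_mul_atTop hc)
  have h0 : Filter.Tendsto (fun t : ℝ => Real.exp (-(c * t)) • f 0) Filter.atTop
      (nhds ((0 : ℝ) • f 0)) := hexp.smul_const (f 0)
  rw [zero_smul] at h0
  refine h0.congr' ?_
  filter_upwards [Filter.eventually_ge_atTop (0 : ℝ)] with t ht
  exact (hrep t ht).symm

/-- For `δ > 0`, every component of the linear system describing a zero
agent of weight `δ` and `k` non-interacting clusters converges, as `t → ∞`, to the total
weighted center of mass `m_* = (δ x₀(0) + ∑ i, wᵢ xᵢ(0)) / (W + δ)`. -/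
theorem zero_agent_convergence_to_center_of_mass {d k : ℕ} (hk : 0 < k)
    (δ : ℝ) (hδ : 0 < δ)
    (w : Fin k → ℝ) (hw : ∀ j, 0 < w j)
    (W : ℝ) (hW : W = ∑ j, w j)
    (x0 : ℝ → EuclideanSpace ℝ (Fin d))
    (x : Fin k → ℝ → EuclideanSpace ℝ (Fin d))
    (hx0 : ∀ t, 0 ≤ t → HasDerivAt x0 (∑ j, w j • (x j t - x0 t)) t)
    (hx : ∀ j, ∀ t, 0 ≤ t → HasDerivAt (x j) (δ • (x0 t - x j t)) t)
    (mstar : EuclideanSpace ℝ (Fin d))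
    (hmstar : mstar = (W + δ)⁻¹ • (δ • x0 0 + ∑ i, w i • x i 0)) :
    Filter.Tendsto x0 Filter.atTop (nhds mstar) ∧
      ∀ j, Filter.Tendsto (x j) Filter.atTop (nhds mstar) := by
  haveI : Nonempty (Fin k) := ⟨⟨0, hk⟩⟩
  have hWpos : 0 < W := hW ▸ Finset.sum_pos (fun j _ => hw j) Finset.univ_nonempty
  have hWδ : 0 < W + δ := by linarith
  set S : ℝ → EuclideanSpace ℝ (Fin d) := fun t => ∑ i, w i • x i t with hSdef
  -- derivative of S
  have hS : ∀ t, 0 ≤ t → HasDerivAt S (δ • (W • x0 t) - δ • S t) t := by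
    intro t ht
    have h1 : HasDerivAt S (∑ i, w i • (δ • (x0 t - x i t))) t :=
      HasDerivAt.fun_sum (fun i _ => (hx i t ht).const_smul (w i))
    convert h1 using 1
    calc δ • (W • x0 t) - δ • S t
        = ∑ i, (δ • (w i • x0 t)) - ∑ i, (δ • (w i • x i t)) := by
          rw [hSdef, ← Finset.smul_sum, ← Finset.smul_sum, ← Finset.sum_smul, hW]
      _ = ∑ i, (δ • (w i • x0 t) - δ • (w i • x i t)) := (Finset.sum_sub_distrib _ _).symm
      _ = ∑ i, w i • (δ • (x0 t - x i t)) := by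
          refine Finset.sum_congr rfl fun i _ => ?_
          module
  -- derivative of x0, rewritten
  have hx0' : ∀ t, 0 ≤ t → HasDerivAt x0 (S t - W • x0 t) t := by
    intro t ht
    convert hx0 t ht using 1
    calc S t - W • x0 t = ∑ j, w j • x j t - ∑ j, w j • x0 t := by
          rw [hSdef, ← Finset.sum_smul, hW]
      _ = ∑ j, (w j • x j t - w j • x0 t) := (Finset.sum_sub_distrib _ _).symm
      _ = ∑ j, w j • (x j t - x0 t) := by
          refine Finset.sum_congr rfl fun j _ => ?_
          rw [smul_sub]
  -- the conserved quantity
  set m : ℝ → EuclideanSpace ℝ (Fin d) := fun t => δ • x0 t + S t with hmdef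
  have hm : ∀ t, 0 ≤ t → HasDerivAt m ((-(0:ℝ)) • m t) t := by
    intro t ht
    have h := ((hx0' t ht).const_smul δ).add (hS t ht)
    convert h using 1
    any_goals rfl
    module
  have hmconst : ∀ t, 0 ≤ t → m t = m 0 := by
    intro t ht
    have := aux_exp_decay 0 m hm t ht
    simpa using this
  -- the decaying quantity y
  set y : ℝ → EuclideanSpace ℝ (Fin d) := fun t => S t - W • x0 t with hydef
  have hy : ∀ t, 0 ≤ t → HasDerivAt y ((-(W + δ)) • y t) t := by
    intro t ht
    have h := (hS t ht).sub ((hx0' t ht).const_smul W)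
    convert h using 1
    simp only [hydef]
    any_goals rfl
    module
  have hy0 : Filter.Tendsto y Filter.atTop (nhds 0) := aux_exp_decay_tendsto _ hWδ y hy
  -- representation of x0
  have hx0rep : ∀ t, 0 ≤ t → x0 t = (W + δ)⁻¹ • (m 0 - y t) := by
    intro t ht
    have h1 : m 0 - y t = (W + δ) • x0 t := by
      rw [← hmconst t ht]; simp only [hmdef, hydef]; module
    rw [h1, smul_smul, inv_mul_cancel₀ (ne_of_gt hWδ), one_smul]
  have hmstar' : mstar = (W + δ)⁻¹ • m 0 := hmstar
  -- tendsto for x0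
  have hx0T : Filter.Tendsto x0 Filter.atTop (nhds mstar) := by
    have h1 : Filter.Tendsto (fun t => (W + δ)⁻¹ • (m 0 - y t)) Filter.atTop
        (nhds ((W + δ)⁻¹ • (m 0 - 0))) :=
      (Filter.Tendsto.const_sub _ hy0).const_smul _
    rw [sub_zero, ← hmstar'] at h1
    refine h1.congr' ?_
    filter_upwards [Filter.eventually_ge_atTop (0 : ℝ)] with t ht
    exact (hx0rep t ht).symm
  refine ⟨hx0T, fun j => ?_⟩
  -- the decaying quantity for each cluster
  set z : ℝ → EuclideanSpace ℝ (Fin d) := fun t => W • x j t - S t with hzdef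
  have hz : ∀ t, 0 ≤ t → HasDerivAt z ((-δ) • z t) t := by
    intro t ht
    have h := ((hx j t ht).const_smul W).sub (hS t ht)
    convert h using 1
    simp only [hzdef]
    any_goals rfl
    module
  have hz0 : Filter.Tendsto z Filter.atTop (nhds 0) := aux_exp_decay_tendsto _ hδ z hz
  -- representation of x j
  have hxjrep : ∀ t, 0 ≤ t → x j t = W⁻¹ • (z t + (m 0 - δ • x0 t)) := by
    intro t ht
    have h1 : z t + (m 0 - δ • x0 t) = W • x j t := by
      rw [← hmconst t ht]; simp only [hmdef, hzdef]; module
    rw [h1, smul_smul, inv_mul_cancel₀ (ne_of_gt hWpos), one_smul]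
  have hlim : W⁻¹ • ((0 : EuclideanSpace ℝ (Fin d)) + (m 0 - δ • mstar)) = mstar := by
    have h1 : m 0 = (W + δ) • mstar := by
      rw [hmstar', smul_smul, mul_inv_cancel₀ (ne_of_gt hWδ), one_smul]
    rw [zero_add, h1, add_smul, add_sub_cancel_right, smul_smul,
      inv_mul_cancel₀ (ne_of_gt hWpos), one_smul]
  have h2 : Filter.Tendsto (fun t => W⁻¹ • (z t + (m 0 - δ • x0 t))) Filter.atTop
      (nhds (W⁻¹ • ((0 : EuclideanSpace ℝ (Fin d)) + (m 0 - δ • mstar)))) :=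
    ((hz0.add (Filter.Tendsto.const_sub _ (hx0T.const_smul δ)))).const_smul _
  rw [hlim] at h2
  refine h2.congr' ?_
  filter_upwards [Filter.eventually_ge_atTop (0 : ℝ)] with t ht
  exact (hxjrep t ht).symm
end

section
/- Let d ≥ 2 and let x_1, x_2 ∈ ℝ^d with |x_1 − x_2| > 1. Then the following are equivalent: (a) every radius of the unit sphere centered at x_1 intersects the unit sphere centered at x_2 at most once, i.e., for every unit vector λ ∈ ℝ^d the set { t ∈ [0,1] : |x_1 + t λ − x_2| = 1 } contains at most one element; (b) |x_1 − x_2| ≥ √2. -/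
open RealInnerProductSpace

lemma aux_orth {d : ℕ} (hd : 2 ≤ d) (v : EuclideanSpace ℝ (Fin d)) (hv : v ≠ 0) :
    ∃ w : EuclideanSpace ℝ (Fin d), ‖w‖ = 1 ∧ ⟪v, w⟫ = 0 := by
  set K : Submodule ℝ (EuclideanSpace ℝ (Fin d)) := ℝ ∙ v
  have hK : Module.finrank ℝ K = 1 := finrank_span_singleton hv
  have htot : Module.finrank ℝ K + Module.finrank ℝ Kᗮ = d := by
    rw [Submodule.finrank_add_finrank_orthogonal]; simp
  have hpos : Kᗮ ≠ ⊥ := by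
    intro hbot
    rw [hbot] at htot
    simp [hK] at htot
    omega
  obtain ⟨w, hwK, hw0⟩ := Submodule.exists_mem_ne_zero_of_ne_bot hpos
  refine ⟨‖w‖⁻¹ • w, ?_, ?_⟩
  · rw [norm_smul]; simp [norm_ne_zero_iff.mpr hw0]
  · rw [real_inner_smul_right]
    have : ⟪v, w⟫ = 0 := by
      have := (Submodule.mem_orthogonal K w).mp hwK v (Submodule.mem_span_singleton_self v)
      simpa using this
    simp [this]

lemma aux_sq {d : ℕ} (x₁ x₂ lam : EuclideanSpace ℝ (Fin d)) (t : ℝ) :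
    ‖x₁ + t • lam - x₂‖ ^ 2
      = t ^ 2 * ‖lam‖ ^ 2 + 2 * t * ⟪lam, x₁ - x₂⟫ + ‖x₁ - x₂‖ ^ 2 := by
  have he : x₁ + t • lam - x₂ = t • lam + (x₁ - x₂) := by abel
  rw [he, norm_add_sq_real, real_inner_smul_left, norm_smul, Real.norm_eq_abs,
    mul_pow, sq_abs]
  ring

set_option maxHeartbeats 1600000 in
/-- Let `d ≥ 2` and `x₁, x₂ ∈ ℝ^d` with `|x₁ − x₂| > 1`. Every radius of
the unit sphere centered at `x₁` meets the unit sphere centered at `x₂` at most once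
(i.e. for every unit vector `λ`, the set `{t ∈ [0,1] : |x₁ + t λ − x₂| = 1}` has at most
one element) if and only if `|x₁ − x₂| ≥ √2`. -/
theorem radius_intersects_sphere_at_most_once_iff {d : ℕ} (hd : 2 ≤ d)
    (x₁ x₂ : EuclideanSpace ℝ (Fin d)) (h : 1 < ‖x₁ - x₂‖) :
    (∀ lam : EuclideanSpace ℝ (Fin d), ‖lam‖ = 1 →
        Set.Subsingleton {t : ℝ | t ∈ Set.Icc (0 : ℝ) 1 ∧ ‖x₁ + t • lam - x₂‖ = 1})
      ↔ Real.sqrt 2 ≤ ‖x₁ - x₂‖ := by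
  set v := x₁ - x₂ with hv
  set R := ‖v‖ with hR
  clear_value v
  clear_value R
  constructor
  · intro H
    by_contra hlt
    push_neg at hlt
    have hR2 : R ^ 2 < 2 := by
      nlinarith [Real.sq_sqrt (by norm_num : (0:ℝ) ≤ 2), Real.sqrt_nonneg 2]
    have hRpos : (0:ℝ) < R := by linarith
    have hvne : v ≠ 0 := norm_pos_iff.mp (by linarith)
    obtain ⟨w, hw1, hwv⟩ := aux_orth hd v hvne
    obtain ⟨u, hu1, huv, huw⟩ : ∃ u : EuclideanSpace ℝ (Fin d),
        ‖u‖ = 1 ∧ ⟪u, v⟫ = R ∧ ⟪u, w⟫ = 0 := by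
      refine ⟨R⁻¹ • v, ?_, ?_, ?_⟩
      · rw [norm_smul, Real.norm_eq_abs, abs_of_pos (inv_pos.mpr hRpos), ← hR,
          inv_mul_cancel₀ (ne_of_gt hRpos)]
      · rw [real_inner_smul_left, real_inner_self_eq_norm_sq, ← hR]
        field_simp
      · rw [real_inner_smul_left, hwv, mul_zero]
    obtain ⟨lam, hlamnorm, hinner⟩ : ∃ lam : EuclideanSpace ℝ (Fin d),
        ‖lam‖ = 1 ∧ ⟪lam, v⟫ = -(R ^ 2) / 2 := by
      set a : ℝ := -R / 2 with ha
      set c : ℝ := Real.sqrt (1 - a ^ 2) with hc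
      have ha2 : a ^ 2 < 1 := by
        have : a ^ 2 = R ^ 2 / 4 := by rw [ha]; ring
        nlinarith
      have hc2 : c ^ 2 = 1 - a ^ 2 := Real.sq_sqrt (by nlinarith)
      refine ⟨a • u + c • w, ?_, ?_⟩
      · have h2' : ‖a • u + c • w‖ ^ 2 = 1 := by
          rw [norm_add_sq_real, real_inner_smul_left, real_inner_smul_right,
            huw, norm_smul, norm_smul, hu1, hw1, Real.norm_eq_abs, Real.norm_eq_abs]
          simp only [mul_one, mul_zero]
          rw [sq_abs, sq_abs]
          nlinarith
        have hf : (‖a • u + c • w‖ - 1) * (‖a • u + c • w‖ + 1) = 0 := by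
          linear_combination h2'
        rcases mul_eq_zero.mp hf with h' | h'
        · linarith
        · linarith [norm_nonneg (a • u + c • w)]
      · have hwv' : ⟪w, v⟫ = 0 := by rw [real_inner_comm]; exact hwv
        rw [inner_add_left, real_inner_smul_left, real_inner_smul_left, huv, hwv', ha]
        ring
    have key : ∀ t : ℝ, ‖x₁ + t • lam - x₂‖ ^ 2 = t ^ 2 - t * R ^ 2 + R ^ 2 := by
      intro t
      rw [aux_sq, ← hv, ← hR, hinner, hlamnorm]
      ring
    have hmem : ∀ t : ℝ, t ∈ Set.Icc (0:ℝ) 1 → t ^ 2 - t * R ^ 2 + R ^ 2 = 1 →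
        t ∈ {t : ℝ | t ∈ Set.Icc (0 : ℝ) 1 ∧ ‖x₁ + t • lam - x₂‖ = 1} := by
      intro t ht he
      refine ⟨ht, ?_⟩
      have h2' : ‖x₁ + t • lam - x₂‖ ^ 2 = 1 := by rw [key t, he]
      have hf : (‖x₁ + t • lam - x₂‖ - 1) * (‖x₁ + t • lam - x₂‖ + 1) = 0 := by
        linear_combination h2'
      rcases mul_eq_zero.mp hf with h' | h'
      · linarith
      · linarith [norm_nonneg (x₁ + t • lam - x₂)]
    have h1 : (R ^ 2 - 1) ∈ {t : ℝ | t ∈ Set.Icc (0 : ℝ) 1 ∧ ‖x₁ + t • lam - x₂‖ = 1} :=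
      hmem _ ⟨by nlinarith, by nlinarith⟩ (by ring)
    have h2 : (1:ℝ) ∈ {t : ℝ | t ∈ Set.Icc (0 : ℝ) 1 ∧ ‖x₁ + t • lam - x₂‖ = 1} :=
      hmem 1 ⟨by norm_num, le_refl 1⟩ (by ring)
    have := H lam hlamnorm h1 h2
    nlinarith
  · intro hR2 lam hlam t₁ ht₁ t₂ ht₂
    obtain ⟨⟨ht₁0, ht₁1⟩, he₁⟩ := ht₁
    obtain ⟨⟨ht₂0, ht₂1⟩, he₂⟩ := ht₂
    have hb := aux_sq x₁ x₂ lam t₁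
    have hb2 := aux_sq x₁ x₂ lam t₂
    rw [he₁, hlam, ← hv, ← hR] at hb
    rw [he₂, hlam, ← hv, ← hR] at hb2
    have hRR : 2 ≤ R ^ 2 := by
      have h2 : Real.sqrt 2 ^ 2 ≤ R ^ 2 := pow_le_pow_left₀ (Real.sqrt_nonneg 2) hR2 2
      rwa [Real.sq_sqrt (by norm_num : (0:ℝ) ≤ 2)] at h2
    by_contra hne
    set b := ⟪lam, v⟫ with hbdef
    clear_value b
    clear hbdef he₁ he₂ hlam hR hv lam v x₁ x₂ hd
    have hsum : t₁ + t₂ = -2 * b := by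
      have hfac : (t₁ - t₂) * (t₁ + t₂ + 2 * b) = 0 := by nlinarith
      rcases mul_eq_zero.mp hfac with h' | h'
      · exact absurd (by linarith) hne
      · linarith
    have hprod : t₁ * t₂ = R ^ 2 - 1 := by linear_combination hb + t₁ * hsum
    have h1 : t₁ = 1 := le_antisymm ht₁1 (by nlinarith [mul_nonneg ht₁0 (sub_nonneg.mpr ht₂1)])
    have h2 : t₂ = 1 := le_antisymm ht₂1 (by nlinarith [mul_nonneg ht₂0 (sub_nonneg.mpr ht₁1)])
    exact hne (h1.trans h2.symm)
end
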